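/- arXiv:0912.4533 — 4 statements merged into one kernel-verified Lean document; each statement's English description precedes it below -/
import Mathlib

section
/- Decomposition of upward truncated variation at the first drawdown time: for every μ ∈ ℝ, c > 0 and T > 0, almost surely UTV_μ^c[0,T] = sup_{0 ≤ t < s ≤ T_c ∧ T} (W_s − W_t − c)_+ + UTV_μ^c[T_c, T]. -/
open MeasureTheory ProbabilityTheory Real Set

noncomputable section

/-- A standard Brownian motion on a probability space: starts at `0`, has continuous paths,
Gaussian increments with variance equal to the elapsed time, and independent increments. -/
structure IsStdBrownianMotion {Ω : Type*} [MeasurableSpace Ω] (P : Measure Ω)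
    (B : ℝ → Ω → ℝ) : Prop where
  meas : ∀ t : ℝ, Measurable (B t)
  start : ∀ᵐ ω ∂P, B 0 ω = 0
  cont : ∀ᵐ ω ∂P, Continuous fun t => B t ω
  gauss_incr : ∀ s t : ℝ, 0 ≤ s → s ≤ t →
    P.map (fun ω => B t ω - B s ω) = gaussianReal 0 (Real.toNNReal (t - s))
  indep_incr : ∀ (n : ℕ) (t : Fin (n + 1) → ℝ), Monotone t → (∀ i, 0 ≤ t i) →
    iIndepFun
      (fun i : Fin n => fun ω => B (t i.succ) ω - B (t i.castSucc) ω) P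

/-- Truncated variation of a path `f` at level `c` over the interval `[a, b]`:
`TV f c a b = sup_n sup_{a ≤ t₁ ≤ ⋯ ≤ t_n ≤ b} ∑ max (|f t_{i+1} - f t_i| - c) 0`.
For `a > b` this is `0` (the supremum of the empty set). -/
def TV (f : ℝ → ℝ) (c a b : ℝ) : ℝ :=
  sSup {x | ∃ (n : ℕ) (t : Fin (n + 1) → ℝ), Monotone t ∧ (∀ i, t i ∈ Set.Icc a b) ∧
    x = ∑ i : Fin n, max (|f (t i.succ) - f (t i.castSucc)| - c) 0}

/-- Upward truncated variation of a path `f` at level `c` over the interval `[a, b]`: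
`UTV f c a b = sup_n sup_{a ≤ t₁ < s₁ < ⋯ < t_n < s_n ≤ b} ∑ max (f s_i - f t_i - c) 0`. -/
def UTV (f : ℝ → ℝ) (c a b : ℝ) : ℝ :=
  sSup {x | ∃ (n : ℕ) (t s : Fin n → ℝ),
    (∀ i, a ≤ t i) ∧ (∀ i, s i ≤ b) ∧ (∀ i, t i < s i) ∧
    (∀ i j : Fin n, i < j → s i < t j) ∧
    x = ∑ i : Fin n, max (f (s i) - f (t i) - c) 0}

/-- Downward truncated variation of a path `f` at level `c` over the interval `[a, b]`:
`DTV f c a b = sup_n sup_{a ≤ t₁ < s₁ < ⋯ < t_n < s_n ≤ b} ∑ max (f t_i - f s_i - c) 0`. -/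
def DTV (f : ℝ → ℝ) (c a b : ℝ) : ℝ :=
  sSup {x | ∃ (n : ℕ) (t s : Fin n → ℝ),
    (∀ i, a ≤ t i) ∧ (∀ i, s i ≤ b) ∧ (∀ i, t i < s i) ∧
    (∀ i j : Fin n, i < j → s i < t j) ∧
    x = ∑ i : Fin n, max (f (t i) - f (s i) - c) 0}

/-- The first time the drawdown of the path `f` reaches level `c`:
`Tc f c = inf {t ≥ 0 : sup_{0 ≤ s ≤ t} f s ≥ f t + c}`. -/
def Tc (f : ℝ → ℝ) (c : ℝ) : ℝ :=
  sInf {t | 0 ≤ t ∧ f t + c ≤ sSup (f '' Set.Icc 0 t)}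

/-- The successive drawdown times `T_c^{(i)}`: `TcIter f c 0 = 0` and
`TcIter f c (i+1) = inf {t > TcIter f c i : sup_{TcIter f c i ≤ s ≤ t} f s ≥ f t + c}`. -/
def TcIter (f : ℝ → ℝ) (c : ℝ) : ℕ → ℝ
  | 0 => 0
  | n + 1 => sInf {t | TcIter f c n < t ∧ f t + c ≤ sSup (f '' Set.Icc (TcIter f c n) t)}

/-- `sup_{a ≤ t < s ≤ b} (f s - f t - c)₊`. -/
def maxGainLT (f : ℝ → ℝ) (c a b : ℝ) : ℝ :=
  sSup {x | ∃ t s : ℝ, a ≤ t ∧ t < s ∧ s ≤ b ∧ x = max (f s - f t - c) 0}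

/-- `sup_{a ≤ t ≤ s ≤ b} (f s - f t - c)₊`. -/
def maxGainLE (f : ℝ → ℝ) (c a b : ℝ) : ℝ :=
  sSup {x | ∃ t s : ℝ, a ≤ t ∧ t ≤ s ∧ s ≤ b ∧ x = max (f s - f t - c) 0}

/-- The discounted series
`UTVser f c T = ∑_{i=1}^∞ e^{-T_c^{(i-1)}/T} · sup_{T_c^{(i-1)} ≤ t < s ≤ T_c^{(i)} ∧ (T_c^{(i-1)}+T)} (f s - f t - c)₊`. -/
def UTVser (f : ℝ → ℝ) (c T : ℝ) : ℝ :=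
  ∑' i : ℕ, Real.exp (-(TcIter f c i) / T) *
    maxGainLT f c (TcIter f c i) (min (TcIter f c (i + 1)) (TcIter f c i + T))

/-- The last instant at which the maximum of `f` on `[0, Tc f c]` is attained. -/
def TcSup (f : ℝ → ℝ) (c : ℝ) : ℝ :=
  sSup {t | t ∈ Set.Icc 0 (Tc f c) ∧ f t = sSup (f '' Set.Icc 0 (Tc f c))}

end

/-!
The identity holds for every continuous path `f`. Before `τ = Tc f c` the drawdown stays
below `c`, so two gains `(t, s)`, `(t', s')` with `s < t'` merge into the single larger gain
`(t, s')`, and on `[0, τ]` the truncated variation is a single supremum.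
At `τ` the path sits exactly `c` below its running maximum `f θ`, `θ < τ`, and stays above
`f τ` on `[θ, τ]`. Hence a pair straddling `τ` splits into `(t, θ)` and `(τ, s)` at no loss,
the drop of `c` paying for the extra truncation, which gives `UTV[0,T] ≤ UTV[0,τ] + UTV[τ,T]`;
conversely a pair ending at `τ` can be moved to end at `θ < τ`, making room to concatenate it
with any chain on `[τ, T]`.
-/

namespace UTV

open Set

def gain (f : ℝ → ℝ) (c : ℝ) (p : ℝ × ℝ) : ℝ := max (f p.2 - f p.1 - c) 0

def gainSum (f : ℝ → ℝ) (c : ℝ) (l : List (ℝ × ℝ)) : ℝ := (l.map (gain f c)).sum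

def chains (a b : ℝ) : Set (List (ℝ × ℝ)) :=
  {l | (∀ p ∈ l, a ≤ p.1 ∧ p.1 < p.2 ∧ p.2 ≤ b) ∧ l.Pairwise fun p q => p.2 < q.1}

section Chains

variable {f : ℝ → ℝ} {c a b : ℝ} {p : ℝ × ℝ} {l : List (ℝ × ℝ)}

lemma gain_nonneg (f : ℝ → ℝ) (c : ℝ) (p : ℝ × ℝ) : 0 ≤ gain f c p := le_max_right _ _

@[simp] lemma gainSum_nil : gainSum f c [] = 0 := rfl

@[simp] lemma gainSum_cons : gainSum f c (p :: l) = gain f c p + gainSum f c l := by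
  simp [gainSum]

lemma gainSum_nonneg (f : ℝ → ℝ) (c : ℝ) (l : List (ℝ × ℝ)) : 0 ≤ gainSum f c l :=
  List.sum_nonneg fun _ hx => by
    obtain ⟨p, -, rfl⟩ := List.mem_map.mp hx
    exact gain_nonneg f c p

lemma gainSum_flatMap (g : ℝ × ℝ → List (ℝ × ℝ)) (l : List (ℝ × ℝ)) :
    gainSum f c (l.flatMap g) = (l.map fun p => gainSum f c (g p)).sum := by
  induction l with
  | nil => rfl
  | cons p l ih =>
    simp only [gainSum] at ih ⊢
    simp [List.flatMap_cons, ih]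

lemma nil_mem_chains : [] ∈ chains a b := ⟨by simp, List.Pairwise.nil⟩

lemma cons_mem_chains :
    p :: l ∈ chains a b ↔
      (a ≤ p.1 ∧ p.1 < p.2 ∧ p.2 ≤ b) ∧ (∀ q ∈ l, p.2 < q.1) ∧ l ∈ chains a b := by
  simp only [chains, mem_ofPred_eq, List.forall_mem_cons, List.pairwise_cons]
  tauto

lemma singleton_mem_chains {t s : ℝ} (ht : a ≤ t) (hts : t < s) (hs : s ≤ b) :
    [(t, s)] ∈ chains a b :=
  cons_mem_chains.mpr ⟨⟨ht, hts, hs⟩, by simp, nil_mem_chains⟩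

lemma chains_mono {a' b' : ℝ} (ha : a' ≤ a) (hb : b ≤ b') : chains a b ⊆ chains a' b' :=
  fun _ hl => ⟨fun p hp => have h := hl.1 p hp; ⟨ha.trans h.1, h.2.1, h.2.2.trans hb⟩, hl.2⟩

lemma mem_chains_of_cons (h : p :: l ∈ chains a b) : l ∈ chains p.2 b := by
  obtain ⟨-, hsep, hl⟩ := cons_mem_chains.mp h
  exact ⟨fun q hq => ⟨(hsep q hq).le, (hl.1 q hq).2⟩, hl.2⟩

lemma chains_eq_of_le (hba : b ≤ a) : chains a b = {[]} := by
  refine Set.eq_singleton_iff_unique_mem.mpr ⟨nil_mem_chains, fun l hl => ?_⟩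
  rcases l with _ | ⟨p, l⟩
  · rfl
  · obtain ⟨⟨h1, h2, h3⟩, -⟩ := cons_mem_chains.mp hl
    linarith

lemma sum_length_le (hl : l ∈ chains a b) : (l.map fun p => p.2 - p.1).sum ≤ max (b - a) 0 := by
  induction l generalizing a with
  | nil => simp
  | cons p l ih =>
    obtain ⟨⟨h1, -, h3⟩, -⟩ := cons_mem_chains.mp hl
    have := ih (mem_chains_of_cons hl)
    rw [max_eq_left (sub_nonneg.mpr h3)] at this
    simp only [List.map_cons, List.sum_cons]
    exact le_max_of_le_left (by linarith)

end Chains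

section Supremum

variable {f : ℝ → ℝ} {c a b : ℝ} {l : List (ℝ × ℝ)}

lemma UTV_eq_sSup (f : ℝ → ℝ) (c a b : ℝ) : UTV f c a b = sSup (gainSum f c '' chains a b) := by
  unfold UTV
  congr 1
  ext x
  constructor
  · rintro ⟨n, t, s, hat, hsb, hts, hsep, rfl⟩
    refine ⟨List.ofFn fun i => (t i, s i), ⟨?_, List.pairwise_ofFn.mpr hsep⟩, ?_⟩
    · simp only [List.mem_ofFn, forall_exists_index]
      rintro _ i rfl
      exact ⟨hat i, hts i, hsb i⟩
    · simp [gainSum, List.sum_ofFn, gain]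
  · rintro ⟨l, ⟨hmem, hsep⟩, rfl⟩
    have hget (i : Fin l.length) := hmem _ (l.get_mem i)
    refine ⟨l.length, fun i => (l.get i).1, fun i => (l.get i).2, fun i => (hget i).1,
      fun i => (hget i).2.2, fun i => (hget i).2.1,
      fun i j hij => List.pairwise_iff_get.mp hsep i j hij, ?_⟩
    conv_lhs => rw [gainSum, ← List.ofFn_get l, List.map_ofFn, List.sum_ofFn]
    rfl

lemma bddAbove_gainSum_image (hf : Continuous f) (hc : 0 < c) (a b : ℝ) :
    BddAbove (gainSum f c '' chains a b) := by
  obtain ⟨K, hK⟩ := isCompact_Icc.exists_bound_of_continuousOn (s := Icc a b) hf.continuousOn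
  obtain ⟨δ, hδ, hδc⟩ := Metric.uniformContinuousOn_iff.mp
    (isCompact_Icc.uniformContinuousOn_of_continuous (s := Icc a b) hf.continuousOn) c hc
  set L := 2 * |K| / δ
  -- a pair with positive gain is at least `δ` long, and its gain is at most `2 |K| = L δ`
  have hgain : ∀ p, a ≤ p.1 → p.1 < p.2 → p.2 ≤ b → gain f c p ≤ L * (p.2 - p.1) := by
    intro p h1 h2 h3
    have hp1 : p.1 ∈ Icc a b := ⟨h1, by linarith⟩
    have hp2 : p.2 ∈ Icc a b := ⟨by linarith, h3⟩
    rcases lt_or_ge (p.2 - p.1) δ with hshort | hlong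
    · have : f p.2 - f p.1 < c := by
        have := hδc p.1 hp1 p.2 hp2
          (by rw [Real.dist_eq, abs_sub_comm, abs_of_pos] <;> linarith)
        rw [Real.dist_eq, abs_sub_comm] at this
        exact (abs_lt.mp this).2
      rw [gain, max_eq_right (by linarith)]
      exact mul_nonneg (by positivity) (by linarith)
    · have h1K := (abs_le.mp ((Real.norm_eq_abs _).symm ▸ hK _ hp1)).1
      have h2K := (abs_le.mp ((Real.norm_eq_abs _).symm ▸ hK _ hp2)).2
      calc gain f c p ≤ 2 * |K| := max_le (by linarith [le_abs_self K]) (by positivity)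
        _ = L * δ := (div_mul_cancel₀ _ hδ.ne').symm
        _ ≤ L * (p.2 - p.1) := by gcongr
  refine ⟨L * max (b - a) 0, ?_⟩
  rintro _ ⟨l, hl, rfl⟩
  calc gainSum f c l ≤ (l.map fun p => L * (p.2 - p.1)).sum :=
        List.sum_le_sum fun p hp => hgain p (hl.1 p hp).1 (hl.1 p hp).2.1 (hl.1 p hp).2.2
    _ = L * (l.map fun p => p.2 - p.1).sum := List.sum_map_mul_left l _ _
    _ ≤ L * max (b - a) 0 := by gcongr; exact sum_length_le hl

lemma UTV_nonneg (f : ℝ → ℝ) (c a b : ℝ) : 0 ≤ UTV f c a b := by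
  rw [UTV_eq_sSup]
  exact Real.sSup_nonneg (by rintro _ ⟨l, -, rfl⟩; exact gainSum_nonneg f c l)

lemma le_UTV (hf : Continuous f) (hc : 0 < c) (hl : l ∈ chains a b) :
    gainSum f c l ≤ UTV f c a b := by
  rw [UTV_eq_sSup]
  exact le_csSup (bddAbove_gainSum_image hf hc a b) (mem_image_of_mem _ hl)

lemma UTV_le {M : ℝ} (hM : ∀ l ∈ chains a b, gainSum f c l ≤ M) : UTV f c a b ≤ M := by
  rw [UTV_eq_sSup]
  exact csSup_le ⟨0, [], nil_mem_chains, rfl⟩ (forall_mem_image.mpr hM)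

lemma UTV_of_le (hba : b ≤ a) : UTV f c a b = 0 := by
  rw [UTV_eq_sSup, chains_eq_of_le hba, image_singleton, gainSum_nil, csSup_singleton]

lemma UTV_anti_left (hf : Continuous f) (hc : 0 < c) {a' : ℝ} (ha : a ≤ a') :
    UTV f c a' b ≤ UTV f c a b :=
  UTV_le fun _ hl => le_UTV hf hc (chains_mono ha le_rfl hl)

lemma maxGainLT_of_le (hba : b ≤ a) : maxGainLT f c a b = 0 := by
  rw [maxGainLT, ← Real.sSup_empty]
  congr 1
  refine eq_empty_of_forall_notMem ?_
  rintro _ ⟨t, s, ht, hts, hs, -⟩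
  linarith

lemma maxGainLT_nonneg (f : ℝ → ℝ) (c a b : ℝ) : 0 ≤ maxGainLT f c a b :=
  Real.sSup_nonneg (by rintro _ ⟨t, s, -, -, -, rfl⟩; exact le_max_right _ _)

lemma gain_le_maxGainLT (hf : Continuous f) (hc : 0 < c) {t s : ℝ} (ht : a ≤ t) (hts : t < s)
    (hs : s ≤ b) : gain f c (t, s) ≤ maxGainLT f c a b := by
  refine le_csSup ⟨UTV f c a b, ?_⟩ ⟨t, s, ht, hts, hs, rfl⟩
  rintro _ ⟨t', s', ht', hts', hs', rfl⟩
  simpa [gain] using le_UTV hf hc (singleton_mem_chains ht' hts' hs')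

lemma maxGainLT_le_UTV (hf : Continuous f) (hc : 0 < c) : maxGainLT f c a b ≤ UTV f c a b := by
  refine Real.sSup_le ?_ (UTV_nonneg f c a b)
  rintro _ ⟨t, s, ht, hts, hs, rfl⟩
  simpa [gain] using le_UTV hf hc (singleton_mem_chains ht hts hs)

end Supremum

section Collapse

variable {f : ℝ → ℝ} {c a b : ℝ} {l : List (ℝ × ℝ)}

lemma gain_add_gain_le {p q : ℝ × ℝ} (h : f p.2 < f q.1 + c) :
    gain f c p + gain f c q ≤ max (gain f c p) (max (gain f c q) (gain f c (p.1, q.2))) := by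
  simp only [gain]
  rcases le_total (f p.2 - f p.1 - c) 0 with hp | hp <;>
    rcases le_total (f q.2 - f q.1 - c) 0 with hq | hq
  · simp [max_eq_right hp, max_eq_right hq]
  · simp [max_eq_right hp]
  · simp [max_eq_right hq]
  · rw [max_eq_left hp, max_eq_left hq]
    exact le_max_of_le_right (le_max_of_le_right (le_max_of_le_left (by linarith)))

lemma exists_gain_ge_gainSum (hdd : ∀ u v, a ≤ u → u ≤ v → v < b → f u < f v + c)
    (hl : l ∈ chains a b) (hne : l ≠ []) :
    ∃ p : ℝ × ℝ, (a ≤ p.1 ∧ p.1 < p.2 ∧ p.2 ≤ b) ∧ gainSum f c l ≤ gain f c p := by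
  induction l generalizing a with
  | nil => exact absurd rfl hne
  | cons p l ih =>
    obtain ⟨hp, -, -⟩ := cons_mem_chains.mp hl
    rcases eq_or_ne l [] with rfl | hl'
    · exact ⟨p, hp, by simp⟩
    obtain ⟨q, hq, hsum⟩ := ih (fun u v hu => hdd u v (hp.1.trans (hp.2.1.le.trans hu)))
      (mem_chains_of_cons hl) hl'
    have hmerge := gain_add_gain_le (f := f) (c := c)
      (hdd p.2 q.1 (hp.1.trans hp.2.1.le) hq.1 (hq.2.1.trans_le hq.2.2))
    rw [gainSum_cons]
    rcases le_max_iff.mp hmerge with h | h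
    · exact ⟨p, hp, by linarith⟩
    rcases le_max_iff.mp h with h | h
    · exact ⟨q, ⟨hp.1.trans (hp.2.1.le.trans hq.1), hq.2⟩, by linarith⟩
    · exact ⟨(p.1, q.2), ⟨hp.1, by linarith [hq.1, hq.2.1], hq.2.2⟩, by linarith⟩

lemma gainSum_le_maxGainLT (hf : Continuous f) (hc : 0 < c)
    (hdd : ∀ u v, a ≤ u → u ≤ v → v < b → f u < f v + c) (hl : l ∈ chains a b) :
    gainSum f c l ≤ maxGainLT f c a b := by
  rcases eq_or_ne l [] with rfl | hne
  · exact maxGainLT_nonneg f c a b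
  obtain ⟨p, ⟨h1, h2, h3⟩, hsum⟩ := exists_gain_ge_gainSum hdd hl hne
  exact hsum.trans (gain_le_maxGainLT hf hc h1 h2 h3)

lemma UTV_eq_maxGainLT_of_drawdown_lt (hf : Continuous f) (hc : 0 < c)
    (hdd : ∀ u v, a ≤ u → u ≤ v → v < b → f u < f v + c) :
    UTV f c a b = maxGainLT f c a b :=
  le_antisymm (UTV_le fun _ hl => gainSum_le_maxGainLT hf hc hdd hl) (maxGainLT_le_UTV hf hc)

end Collapse

section Drop

variable {f : ℝ → ℝ} {c a b θ τ : ℝ} {p x : ℝ × ℝ} {l : List (ℝ × ℝ)}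

noncomputable def leftPart (θ τ : ℝ) (p : ℝ × ℝ) : List (ℝ × ℝ) :=
  if p.2 ≤ τ then [p] else if p.1 < θ then [(p.1, θ)] else []

noncomputable def rightPart (τ : ℝ) (p : ℝ × ℝ) : List (ℝ × ℝ) :=
  if τ ≤ p.1 then [p] else if τ < p.2 then [(τ, p.2)] else []

lemma mem_leftPart (hθτ : θ < τ) (hp : p.1 < p.2) (hx : x ∈ leftPart θ τ p) :
    x.1 = p.1 ∧ x.1 < x.2 ∧ x.2 ≤ p.2 ∧ x.2 ≤ τ := by
  unfold leftPart at hx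
  split_ifs at hx with h2 h1
  · rw [List.mem_singleton.mp hx]
    exact ⟨rfl, hp, le_rfl, h2⟩
  · rw [List.mem_singleton.mp hx]
    exact ⟨rfl, h1, by linarith [not_le.mp h2], hθτ.le⟩
  · exact absurd hx List.not_mem_nil

lemma mem_rightPart (hp : p.1 < p.2) (hx : x ∈ rightPart τ p) :
    p.1 ≤ x.1 ∧ τ ≤ x.1 ∧ x.1 < x.2 ∧ x.2 = p.2 := by
  unfold rightPart at hx
  split_ifs at hx with h1 h2
  · rw [List.mem_singleton.mp hx]
    exact ⟨le_rfl, h1, hp, rfl⟩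
  · rw [List.mem_singleton.mp hx]
    exact ⟨(not_le.mp h1).le, le_rfl, h2, rfl⟩
  · exact absurd hx List.not_mem_nil

lemma flatMap_leftPart_mem_chains (hθτ : θ < τ) (hl : l ∈ chains a b) :
    l.flatMap (leftPart θ τ) ∈ chains a τ := by
  refine ⟨fun x hx => ?_, List.pairwise_flatMap.mpr ⟨fun p _ => ?_, ?_⟩⟩
  · obtain ⟨p, hp, hx⟩ := List.mem_flatMap.mp hx
    obtain ⟨h1, h2, -, h4⟩ := mem_leftPart hθτ (hl.1 p hp).2.1 hx
    exact ⟨h1 ▸ (hl.1 p hp).1, h2, h4⟩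
  · unfold leftPart
    split_ifs <;> simp
  · refine hl.2.imp_of_mem fun {p p'} hp hp' hpp' x hx y hy => ?_
    have hx := mem_leftPart hθτ (hl.1 p hp).2.1 hx
    have hy := mem_leftPart hθτ (hl.1 p' hp').2.1 hy
    linarith

lemma flatMap_rightPart_mem_chains (hl : l ∈ chains a b) :
    l.flatMap (rightPart τ) ∈ chains τ b := by
  refine ⟨fun x hx => ?_, List.pairwise_flatMap.mpr ⟨fun p _ => ?_, ?_⟩⟩
  · obtain ⟨p, hp, hx⟩ := List.mem_flatMap.mp hx
    obtain ⟨-, h2, h3, h4⟩ := mem_rightPart (hl.1 p hp).2.1 hx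
    exact ⟨h2, h3, h4 ▸ (hl.1 p hp).2.2⟩
  · unfold rightPart
    split_ifs <;> simp
  · refine hl.2.imp_of_mem fun {p p'} hp hp' hpp' x hx y hy => ?_
    have hx := mem_rightPart (hl.1 p hp).2.1 hx
    have hy := mem_rightPart (hl.1 p' hp').2.1 hy
    linarith

lemma gain_le_gainSum_leftPart_add_rightPart (hdrop : f τ + c ≤ f θ)
    (hlow : ∀ u ∈ Ico θ τ, f τ ≤ f u) (hθτ : θ < τ) (hp : p.1 < p.2) :
    gain f c p ≤ gainSum f c (leftPart θ τ p) + gainSum f c (rightPart τ p) := by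
  unfold leftPart rightPart
  by_cases h2 : p.2 ≤ τ
  · simp [h2, show ¬τ ≤ p.1 by linarith, not_lt.mpr h2]
  by_cases h1 : τ ≤ p.1
  · simp [h2, h1, show ¬p.1 < θ by linarith]
  have hτp := not_le.mp h2
  by_cases hθ : p.1 < θ
  · simp only [h2, h1, hτp, hθ, if_false, if_true, gainSum_cons, gainSum_nil, add_zero, gain]
    calc max (f p.2 - f p.1 - c) 0
        ≤ max ((f θ - f p.1 - c) + (f p.2 - f τ - c)) 0 := max_le_max (by linarith) le_rfl
      _ ≤ max (f θ - f p.1 - c) 0 + max (f p.2 - f τ - c) 0 :=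
        max_le (add_le_add (le_max_left _ _) (le_max_left _ _))
          (add_nonneg (le_max_right _ _) (le_max_right _ _))
  · simp only [h2, h1, hτp, hθ, if_false, if_true, gainSum_cons, gainSum_nil, add_zero, zero_add]
    exact max_le_max (by linarith [hlow p.1 ⟨not_lt.mp hθ, not_le.mp h1⟩]) le_rfl

lemma UTV_le_UTV_add_UTV_of_drop (hf : Continuous f) (hc : 0 < c) (hdrop : f τ + c ≤ f θ)
    (hlow : ∀ u ∈ Ico θ τ, f τ ≤ f u) (hθτ : θ < τ) :
    UTV f c a b ≤ UTV f c a τ + UTV f c τ b :=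
  UTV_le fun l hl => calc
    gainSum f c l
        ≤ (l.map fun p => gainSum f c (leftPart θ τ p) + gainSum f c (rightPart τ p)).sum :=
      List.sum_le_sum fun p hp =>
        gain_le_gainSum_leftPart_add_rightPart hdrop hlow hθτ (hl.1 p hp).2.1
    _ = gainSum f c (l.flatMap (leftPart θ τ)) + gainSum f c (l.flatMap (rightPart τ)) := by
      rw [List.sum_map_add, gainSum_flatMap, gainSum_flatMap]
    _ ≤ UTV f c a τ + UTV f c τ b :=
      add_le_add (le_UTV hf hc (flatMap_leftPart_mem_chains hθτ hl))
        (le_UTV hf hc (flatMap_rightPart_mem_chains hl))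

lemma maxGainLT_add_UTV_le_of_drop (hf : Continuous f) (hc : 0 < c)
    (hlow : ∀ u ∈ Ico θ τ, f τ ≤ f u) (hθτ : θ < τ) (haτ : a ≤ τ) (hτb : τ ≤ b) :
    maxGainLT f c a τ + UTV f c τ b ≤ UTV f c a b := by
  have hpair : ∀ t s, a ≤ t → t < s → s ≤ τ → gain f c (t, s) + UTV f c τ b ≤ UTV f c a b := by
    intro t s ht hts hs
    rw [← le_sub_iff_add_le']
    refine UTV_le fun l hl => le_sub_iff_add_le'.mpr ?_
    have hsep : ∀ q ∈ l, τ ≤ q.1 := fun q hq => (hl.1 q hq).1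
    have hl' := chains_mono haτ le_rfl hl
    rcases hs.lt_or_eq with hs | rfl
    · simpa using le_UTV hf hc (cons_mem_chains.mpr
        ⟨⟨ht, hts, hs.le.trans hτb⟩, fun q hq => hs.trans_le (hsep q hq), hl'⟩)
    rcases lt_or_ge t θ with htθ | hθt
    · calc gain f c (t, s) + gainSum f c l ≤ gain f c (t, θ) + gainSum f c l := by
            gcongr
            exact max_le_max (by linarith [hlow θ ⟨le_rfl, hθτ⟩]) le_rfl
        _ ≤ UTV f c a b := by
            simpa using le_UTV hf hc (cons_mem_chains.mpr
              ⟨⟨ht, htθ, hθτ.le.trans hτb⟩, fun q hq => hθτ.trans_le (hsep q hq), hl'⟩)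
    · have hzero : gain f c (t, s) = 0 := max_eq_right (by linarith [hlow t ⟨hθt, hts⟩])
      rw [hzero, zero_add]
      exact le_UTV hf hc hl'
  rw [← le_sub_iff_add_le]
  refine Real.sSup_le ?_ (sub_nonneg.mpr (UTV_anti_left hf hc haτ))
  rintro _ ⟨t, s, ht, hts, hs, rfl⟩
  exact le_sub_iff_add_le.mpr (hpair t s ht hts hs)

end Drop

section FirstDrawdown

def drawdownTimes (f : ℝ → ℝ) (c : ℝ) : Set ℝ := {t | 0 ≤ t ∧ f t + c ≤ sSup (f '' Icc 0 t)}

variable {f : ℝ → ℝ} {c : ℝ}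

lemma Tc_eq_sInf : Tc f c = sInf (drawdownTimes f c) := rfl

lemma bddBelow_drawdownTimes : BddBelow (drawdownTimes f c) := ⟨0, fun _ ht => ht.1⟩

lemma Tc_nonneg (f : ℝ → ℝ) (c : ℝ) : 0 ≤ Tc f c := Real.sInf_nonneg fun _ ht => ht.1

lemma isClosed_drawdownTimes (hf : Continuous f) (c : ℝ) : IsClosed (drawdownTimes f c) := by
  -- writing `[0, t] = [0, 1] * t` makes the running maximum a continuous function of `t`
  have hmax : Continuous fun t => sSup ((fun s => f (s * t)) '' Icc 0 1) :=
    isCompact_Icc.continuous_sSup (f := fun t s => f (s * t))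
      (hf.comp (continuous_snd.mul continuous_fst))
  have hset : drawdownTimes f c =
      Ici 0 ∩ {t | f t + c ≤ sSup ((fun s => f (s * t)) '' Icc 0 1)} := by
    ext t
    simp only [mem_ofPred_eq, mem_inter_iff, mem_Ici]
    refine and_congr_right fun ht => ?_
    rw [← image_image f (· * t), image_mul_right_Icc zero_le_one ht, zero_mul, one_mul]
  rw [hset]
  exact isClosed_Ici.inter (isClosed_le (by fun_prop) hmax)

lemma Tc_mem (hf : Continuous f) (hne : (drawdownTimes f c).Nonempty) :
    Tc f c ∈ drawdownTimes f c :=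
  (isClosed_drawdownTimes hf c).csInf_mem hne bddBelow_drawdownTimes

lemma sSup_image_Icc_lt_of_lt_Tc {u : ℝ} (hu : 0 ≤ u) (huτ : u < Tc f c) :
    sSup (f '' Icc 0 u) < f u + c :=
  not_le.mp fun h => notMem_of_lt_csInf huτ bddBelow_drawdownTimes ⟨hu, h⟩

lemma drawdown_lt_of_lt_Tc (hf : Continuous f) {u v : ℝ} (hu : 0 ≤ u) (huv : u ≤ v)
    (hv : v < Tc f c) : f u < f v + c :=
  (le_csSup (isCompact_Icc.bddAbove_image hf.continuousOn) (mem_image_of_mem f ⟨hu, huv⟩)).trans_lt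
    (sSup_image_Icc_lt_of_lt_Tc (hu.trans huv) hv)

lemma pos_of_Tc_pos (hτ : 0 < Tc f c) : 0 < c := by
  by_contra! hc
  have h0 : (0 : ℝ) ∈ drawdownTimes f c :=
    ⟨le_rfl, by simpa [Icc_self, image_singleton, csSup_singleton] using hc⟩
  exact hτ.not_ge (csInf_le bddBelow_drawdownTimes h0)

lemma exists_drop_before_Tc (hf : Continuous f) (hτ : 0 < Tc f c) :
    ∃ θ < Tc f c, f (Tc f c) + c ≤ f θ ∧ ∀ u ∈ Ico θ (Tc f c), f (Tc f c) ≤ f u := by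
  have hne : (drawdownTimes f c).Nonempty :=
    nonempty_iff_ne_empty.mpr fun he => hτ.ne' (by rw [Tc_eq_sInf, he, Real.sInf_empty])
  obtain ⟨θ, hθ, hθmax⟩ :=
    isCompact_Icc.exists_sSup_image_eq (nonempty_Icc.mpr hτ.le) hf.continuousOn
  have hdrop : f (Tc f c) + c ≤ f θ := hθmax ▸ (Tc_mem hf hne).2
  have hθτ : θ < Tc f c := hθ.2.lt_of_ne fun h => by
    rw [h] at hdrop
    linarith [pos_of_Tc_pos hτ]
  refine ⟨θ, hθτ, hdrop, fun u hu => ?_⟩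
  linarith [drawdown_lt_of_lt_Tc hf hθ.1 hu.1 hu.2]

end FirstDrawdown

theorem UTV_eq_maxGainLT_add_UTV_Tc {f : ℝ → ℝ} (hf : Continuous f) (c T : ℝ) :
    UTV f c 0 T = maxGainLT f c 0 (min (Tc f c) T) + UTV f c (Tc f c) T := by
  -- `Tc f c = 0` also covers `c ≤ 0` and a drawdown that never reaches `c` (`sInf ∅ = 0`)
  rcases (Tc_nonneg f c).eq_or_lt with hτ | hτ
  · rw [← hτ, maxGainLT_of_le (min_le_left 0 T), zero_add]
  have hc := pos_of_Tc_pos hτ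
  have hdd : ∀ u v, 0 ≤ u → u ≤ v → v < Tc f c → f u < f v + c :=
    fun _ _ => drawdown_lt_of_lt_Tc hf
  rcases le_or_gt T (Tc f c) with hTτ | hτT
  · rw [min_eq_right hTτ, UTV_of_le hTτ, add_zero]
    exact UTV_eq_maxGainLT_of_drawdown_lt hf hc
      fun u v hu huv hv => hdd u v hu huv (hv.trans_le hTτ)
  obtain ⟨θ, hθτ, hdrop, hlow⟩ := exists_drop_before_Tc hf hτ
  rw [min_eq_left hτT.le]
  refine le_antisymm ?_ (maxGainLT_add_UTV_le_of_drop hf hc hlow hθτ hτ.le hτT.le)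
  calc UTV f c 0 T ≤ UTV f c 0 (Tc f c) + UTV f c (Tc f c) T :=
        UTV_le_UTV_add_UTV_of_drop hf hc hdrop hlow hθτ
    _ = maxGainLT f c 0 (Tc f c) + UTV f c (Tc f c) T := by
        rw [UTV_eq_maxGainLT_of_drawdown_lt hf hc hdd]

end UTV

theorem UTV_decomposition_first_drawdown_general {Ω : Type*} [MeasurableSpace Ω] (P : Measure Ω)
    (B : ℝ → Ω → ℝ) (hB : IsStdBrownianMotion P B)
    (μ c T : ℝ) :
    ∀ᵐ ω ∂P,
      UTV (fun t => B t ω + μ * t) c 0 T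
        = maxGainLT (fun t => B t ω + μ * t) c 0 (min (Tc (fun t => B t ω + μ * t) c) T)
          + UTV (fun t => B t ω + μ * t) c (Tc (fun t => B t ω + μ * t) c) T := by
  filter_upwards [hB.cont] with ω hω
  exact UTV.UTV_eq_maxGainLT_add_UTV_Tc (hω.add (continuous_const.mul continuous_id)) c T

/-- Decomposition at the first drawdown time: for every `μ`, `c > 0`, `T > 0`,
almost surely `UTV_μ^c[0,T] = sup_{0 ≤ t < s ≤ T_c ∧ T} (W_s - W_t - c)₊ + UTV_μ^c[T_c, T]`. -/
theorem UTV_decomposition_first_drawdown {Ω : Type*} [MeasurableSpace Ω] (P : Measure Ω)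
    [IsProbabilityMeasure P] (B : ℝ → Ω → ℝ) (hB : IsStdBrownianMotion P B)
    (μ c T : ℝ) (hc : 0 < c) (hT : 0 < T) :
    ∀ᵐ ω ∂P,
      UTV (fun t => B t ω + μ * t) c 0 T
        = maxGainLT (fun t => B t ω + μ * t) c 0 (min (Tc (fun t => B t ω + μ * t) c) T)
          + UTV (fun t => B t ω + μ * t) c (Tc (fun t => B t ω + μ * t) c) T :=
  UTV_decomposition_first_drawdown_general P B hB μ c T
end

section
/- Iterated decomposition of upward truncated variation: for every μ ∈ ℝ, c > 0 and T > 0, almost surely UTV_μ^c[0,T] = Σ_{i ≥ 1 : T_c^{(i−1)} ≤ T} sup_{T_c^{(i−1)} ≤ t < s ≤ T_c^{(i)} ∧ T} (W_s − W_t − c)_+. -/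
open MeasureTheory ProbabilityTheory Real Set

/-!
Write `τₙ` for the drawdown times `TcIter`. Inside an epoch `[τₙ, τₙ₊₁)` the path never falls by
`c` below an earlier value, so any admissible family of increments inside one epoch gains no more
than a single increment, and an increment straddling `τₙ₊₁` can be cut at the maximum of the
epoch and restarted at `τₙ₊₁`. Hence `UTV` is at most the sum of the epoch suprema; conversely,
nearly optimal increments chosen in distinct epochs form an admissible family. Almost surely the
drifted Brownian path falls by more than `c` over infinitely many unit intervals, so every `τₙ` is
finite, and by continuity `τₙ → ∞`, so only finitely many epochs meet `[0, T]`.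
-/

open Filter Topology

section RunningMax

variable {f : ℝ → ℝ}

/-- Reparametrising `[a, t]` by `[0, 1]` turns the running maximum into a supremum over a fixed
compact set, to which `IsCompact.continuous_sSup` applies. -/
theorem continuousOn_sSup_image_Icc (hf : Continuous f) (a : ℝ) :
    ContinuousOn (fun t => sSup (f '' Icc a t)) (Ici a) := by
  have hcont : Continuous fun t => sSup ((fun θ => f (a + θ • (t - a))) '' Icc (0 : ℝ) 1) :=
    isCompact_Icc.continuous_sSup (f := fun t θ => f (a + θ • (t - a))) (by fun_prop)
  refine hcont.continuousOn.congr fun t ht => ?_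
  rw [← segment_eq_Icc (𝕜 := ℝ) (mem_Ici.1 ht), segment_eq_image', ← image_comp]
  rfl

theorem exists_eq_sSup_image_Icc (hf : Continuous f) {a t : ℝ} (h : a ≤ t) :
    ∃ x ∈ Icc a t, f x = sSup (f '' Icc a t) := by
  obtain ⟨x, hx, hmax⟩ := isCompact_Icc.exists_sSup_image_eq (nonempty_Icc.2 h) hf.continuousOn
  exact ⟨x, hx, hmax.symm⟩

end RunningMax

section Drawdown

variable {f : ℝ → ℝ} {c : ℝ}

/-- `TcIter f c (n + 1)` is by definition `sInf (drawdownTimes f c (TcIter f c n))`. -/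
def drawdownTimes (f : ℝ → ℝ) (c a : ℝ) : Set ℝ :=
  {t | a < t ∧ f t + c ≤ sSup (f '' Icc a t)}

theorem isClosed_drawdownTimes (hf : Continuous f) (hc : 0 < c) (a : ℝ) :
    IsClosed (drawdownTimes f c a) := by
  have hclosed : IsClosed (Ici a ∩ (fun t => sSup (f '' Icc a t) - (f t + c)) ⁻¹' Ici 0) :=
    ((continuousOn_sSup_image_Icc hf a).sub (hf.continuousOn.add continuousOn_const))
      |>.preimage_isClosed_of_isClosed isClosed_Ici isClosed_Ici
  convert hclosed using 1
  ext t
  simp only [drawdownTimes, mem_ofPred_eq, mem_inter_iff, mem_Ici, mem_preimage, sub_nonneg]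
  refine ⟨fun ht => ⟨ht.1.le, ht.2⟩, fun ht => ⟨ht.1.lt_of_ne ?_, ht.2⟩⟩
  rintro rfl
  have := ht.2
  rw [Icc_self, image_singleton, csSup_singleton] at this
  linarith

theorem sInf_drawdownTimes_mem (hf : Continuous f) (hc : 0 < c) {a : ℝ}
    (hne : (drawdownTimes f c a).Nonempty) :
    sInf (drawdownTimes f c a) ∈ drawdownTimes f c a :=
  (isClosed_drawdownTimes hf hc a).csInf_mem hne ⟨a, fun _ ht => ht.1.le⟩

theorem drawdownTimes_nonempty_of_frequently (hf : Continuous f)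
    (hfall : ∃ᶠ k : ℕ in atTop, f (k + 1) + c ≤ f k) (a : ℝ) :
    (drawdownTimes f c a).Nonempty := by
  obtain ⟨k, hk, hfk⟩ := frequently_atTop.1 hfall ⌈a⌉₊
  have hak : a ≤ k := (Nat.le_ceil a).trans (by exact_mod_cast hk)
  exact ⟨k + 1, by linarith, hfk.trans (hf.continuousOn.le_sSup_image_Icc ⟨hak, by linarith⟩)⟩

end Drawdown

section TcIter

variable {f : ℝ → ℝ} {c : ℝ}

theorem lt_add_of_mem_epoch (hf : Continuous f) (hc : 0 < c) {n : ℕ} {u v : ℝ}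
    (hu : TcIter f c n ≤ u) (huv : u ≤ v) (hv : v < TcIter f c (n + 1)) : f u < f v + c := by
  refine (hf.continuousOn.le_sSup_image_Icc ⟨hu, huv⟩).trans_lt ?_
  rcases (hu.trans huv).eq_or_lt with heq | hlt
  · rw [← heq, Icc_self, image_singleton, csSup_singleton]
    linarith
  · by_contra! hdd
    exact (csInf_le ⟨_, fun _ ht => ht.1.le⟩ ⟨hlt, hdd⟩ : TcIter f c (n + 1) ≤ v).not_gt hv

variable (hf : Continuous f) (hc : 0 < c) (hrec : ∀ a, (drawdownTimes f c a).Nonempty)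
include hf hc hrec

theorem TcIter_succ_mem (n : ℕ) :
    TcIter f c (n + 1) ∈ drawdownTimes f c (TcIter f c n) :=
  sInf_drawdownTimes_mem hf hc (hrec _)

theorem TcIter_strictMono : StrictMono (TcIter f c) :=
  strictMono_nat_of_lt_succ fun n => (TcIter_succ_mem hf hc hrec n).1

theorem TcIter_nonneg (n : ℕ) : 0 ≤ TcIter f c n :=
  (TcIter_strictMono hf hc hrec).monotone n.zero_le

/-- Each epoch contains a fall by `c`, which a continuous path cannot afford infinitely often
before a finite time. -/
theorem not_bddAbove_range_TcIter : ¬BddAbove (range (TcIter f c)) := by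
  intro hbdd
  have hlim : Tendsto (TcIter f c) atTop (𝓝 (⨆ n, TcIter f c n)) :=
    tendsto_atTop_ciSup (TcIter_strictMono hf hc hrec).monotone hbdd
  have hlim' : Tendsto (fun n => TcIter f c (n + 1)) atTop (𝓝 (⨆ n, TcIter f c n)) :=
    hlim.comp (tendsto_add_atTop_nat 1)
  have hpeak (n : ℕ) : ∃ x ∈ Icc (TcIter f c n) (TcIter f c (n + 1)),
      f (TcIter f c (n + 1)) + c ≤ f x := by
    obtain ⟨x, hx, hmax⟩ := exists_eq_sSup_image_Icc hf (TcIter_succ_mem hf hc hrec n).1.le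
    exact ⟨x, hx, hmax ▸ (TcIter_succ_mem hf hc hrec n).2⟩
  choose x hx hfall using hpeak
  have hxlim : Tendsto x atTop (𝓝 (⨆ n, TcIter f c n)) :=
    tendsto_of_tendsto_of_tendsto_of_le_of_le hlim hlim' (fun n => (hx n).1) (fun n => (hx n).2)
  have hgap : Tendsto (fun n => f (x n) - f (TcIter f c (n + 1))) atTop (𝓝 0) := by
    simpa using (hf.tendsto _ |>.comp hxlim).sub (hf.tendsto _ |>.comp hlim')
  have : c ≤ 0 := ge_of_tendsto' hgap fun n => by linarith [hfall n]
  linarith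

theorem exists_TcIter_lt_le {T : ℝ} (hT : 0 < T) :
    ∃ n, TcIter f c n < T ∧ T ≤ TcIter f c (n + 1) := by
  have hex : ∃ k, T ≤ TcIter f c k := by
    obtain ⟨_, ⟨k, rfl⟩, hk⟩ := not_bddAbove_iff.1 (not_bddAbove_range_TcIter hf hc hrec) T
    exact ⟨k, hk.le⟩
  obtain ⟨n, hn⟩ : ∃ n, Nat.find hex = n + 1 :=
    Nat.exists_eq_succ_of_ne_zero fun h => by
      have := Nat.find_spec hex
      rw [h] at this
      exact this.not_gt hT
  exact ⟨n, not_le.1 (Nat.find_min hex (by omega)), hn ▸ Nat.find_spec hex⟩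

end TcIter

section Chains

variable {f : ℝ → ℝ} {c : ℝ}

def gain (f : ℝ → ℝ) (c t s : ℝ) : ℝ := max (f s - f t - c) 0

theorem gain_nonneg (t s : ℝ) : 0 ≤ gain f c t s := le_max_right _ _

theorem gain_self (hc : 0 ≤ c) (t : ℝ) : gain f c t t = 0 := by
  simp [gain, hc]

/-- `IsGainChain b a l`: `l = [(t₁, s₁), …, (tₙ, sₙ)]` with `a ≤ t₁ < s₁ ≤ t₂ < ⋯ < sₙ ≤ b`. -/
inductive IsGainChain (b : ℝ) : ℝ → List (ℝ × ℝ) → Prop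
  | nil (a : ℝ) : IsGainChain b a []
  | cons {a t s : ℝ} {l : List (ℝ × ℝ)} (hat : a ≤ t) (hts : t < s) (hsb : s ≤ b)
      (hl : IsGainChain b s l) : IsGainChain b a ((t, s) :: l)

def gainSum (f : ℝ → ℝ) (c : ℝ) (l : List (ℝ × ℝ)) : ℝ :=
  (l.map fun p => gain f c p.1 p.2).sum

@[simp] theorem gainSum_nil : gainSum f c [] = 0 := rfl

@[simp] theorem gainSum_cons (t s : ℝ) (l : List (ℝ × ℝ)) :
    gainSum f c ((t, s) :: l) = gain f c t s + gainSum f c l := by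
  simp [gainSum]

theorem gainSum_ofFn {n : ℕ} (t s : Fin n → ℝ) :
    gainSum f c (List.ofFn fun i => (t i, s i)) = ∑ i, max (f (s i) - f (t i) - c) 0 := by
  simp [gainSum, gain, List.map_ofFn, List.sum_ofFn, Function.comp_def]

theorem IsGainChain.eq_nil_of_lt {a b : ℝ} {l : List (ℝ × ℝ)} (hl : IsGainChain b a l)
    (hba : b < a) : l = [] := by
  cases hl with
  | nil => rfl
  | cons hat hts hsb => exact absurd ((hat.trans_lt hts).trans_le hsb) hba.not_gt

theorem isGainChain_ofFn {n : ℕ} {a b : ℝ} {t s : Fin n → ℝ} (ha : ∀ i, a ≤ t i)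
    (hb : ∀ i, s i ≤ b) (hts : ∀ i, t i < s i) (hst : ∀ i j, i < j → s i < t j) :
    IsGainChain b a (List.ofFn fun i => (t i, s i)) := by
  induction n generalizing a with
  | zero => exact .nil a
  | succ n ih =>
    rw [List.ofFn_succ]
    exact .cons (ha 0) (hts 0) (hb 0)
      (ih (fun i => (hst 0 i.succ i.succ_pos).le) (fun i => hb _) (fun i => hts _)
        fun i j hij => hst _ _ (Fin.succ_lt_succ_iff.2 hij))

def utvSums (f : ℝ → ℝ) (c a b : ℝ) : Set ℝ :=
  {x | ∃ (n : ℕ) (t s : Fin n → ℝ),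
    (∀ i, a ≤ t i) ∧ (∀ i, s i ≤ b) ∧ (∀ i, t i < s i) ∧
    (∀ i j : Fin n, i < j → s i < t j) ∧
    x = ∑ i : Fin n, max (f (s i) - f (t i) - c) 0}

theorem zero_mem_utvSums (a b : ℝ) : (0 : ℝ) ∈ utvSums f c a b :=
  ⟨0, Fin.elim0, Fin.elim0, (·.elim0), (·.elim0), (·.elim0), fun i => i.elim0, by simp⟩

theorem mem_upperBounds_utvSums {a b S : ℝ}
    (h : ∀ l, IsGainChain b a l → gainSum f c l ≤ S) : S ∈ upperBounds (utvSums f c a b) := by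
  rintro _ ⟨n, t, s, ha, hb, hts, hst, rfl⟩
  simpa only [gainSum_ofFn] using h _ (isGainChain_ofFn ha hb hts hst)

end Chains

section Gains

variable {f : ℝ → ℝ} {c : ℝ}

theorem UTV_le_of_forall_isGainChain {a b S : ℝ}
    (h : ∀ l, IsGainChain b a l → gainSum f c l ≤ S) : UTV f c a b ≤ S :=
  csSup_le ⟨0, zero_mem_utvSums a b⟩ (mem_upperBounds_utvSums h)

theorem maxGainLT_nonneg (c a b : ℝ) : 0 ≤ maxGainLT f c a b :=
  Real.sSup_nonneg (by rintro _ ⟨t, s, -, -, -, rfl⟩; exact gain_nonneg t s)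

theorem maxGainLT_of_le {a b : ℝ} (h : b ≤ a) : maxGainLT f c a b = 0 := by
  rw [maxGainLT, ← Real.sSup_empty]
  congr
  refine eq_empty_of_forall_notMem ?_
  rintro _ ⟨t, s, hat, hts, hsb, -⟩
  linarith

theorem bddAbove_maxGainLT_set (hf : Continuous f) (c a b : ℝ) :
    BddAbove {x | ∃ t s : ℝ, a ≤ t ∧ t < s ∧ s ≤ b ∧ x = max (f s - f t - c) 0} := by
  have hcont : Continuous fun p : ℝ × ℝ => gain f c p.1 p.2 := by unfold gain; fun_prop
  refine ((isCompact_Icc (a := a) (b := b)).prod (isCompact_Icc (a := a) (b := b))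
    |>.image hcont).bddAbove.mono ?_
  rintro _ ⟨t, s, hat, hts, hsb, rfl⟩
  exact ⟨(t, s), ⟨⟨hat, hts.le.trans hsb⟩, ⟨hat.trans hts.le, hsb⟩⟩, rfl⟩

theorem gain_le_maxGainLT (hf : Continuous f) (hc : 0 ≤ c) {a b t s : ℝ} (hat : a ≤ t)
    (hts : t ≤ s) (hsb : s ≤ b) : gain f c t s ≤ maxGainLT f c a b := by
  rcases hts.eq_or_lt with rfl | hts
  · rw [gain_self hc]
    exact maxGainLT_nonneg c a b
  · exact le_csSup (bddAbove_maxGainLT_set hf c a b) ⟨t, s, hat, hts, hsb, rfl⟩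

/-- Ending strictly before `b` is what lets pairs taken from adjacent intervals form an
admissible family for `UTV`, whose pairs are strictly separated. -/
theorem exists_gain_ge_maxGainLT_sub (hf : Continuous f) {a b ε : ℝ} (hab : a < b)
    (hε : 0 < ε) : ∃ t s, a ≤ t ∧ t < s ∧ s < b ∧ maxGainLT f c a b - ε ≤ gain f c t s := by
  obtain ⟨_, ⟨t, s, hat, hts, hsb, rfl⟩, hlt⟩ :=
    exists_lt_of_lt_csSup (s := {x | ∃ t s : ℝ, a ≤ t ∧ t < s ∧ s ≤ b ∧ x = max (f s - f t - c) 0})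
      ⟨_, a, b, le_rfl, hab, le_rfl, rfl⟩ (sub_lt_self (maxGainLT f c a b) hε)
  have hcont : ContinuousAt (gain f c t) s := by unfold gain; fun_prop
  have hnear : ∀ᶠ s' in 𝓝[<] s, maxGainLT f c a b - ε < gain f c t s' :=
    hcont.tendsto.mono_left nhdsWithin_le_nhds |>.eventually (lt_mem_nhds hlt)
  obtain ⟨s', hgain, hts', hs's⟩ := (hnear.and (Ioo_mem_nhdsLT hts)).exists
  exact ⟨t, s', hat, hts', hs's.trans_le hsb, hgain.le⟩

/-- Without a fall by `c`, two profitable pairs are beaten by the pair joining the outer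
endpoints, so a whole chain is dominated by a single pair. -/
theorem exists_gainSum_le_gain (hc : 0 < c) {a b : ℝ} {l : List (ℝ × ℝ)}
    (hl : IsGainChain b a l) (hab : a ≤ b)
    (hdd : ∀ u v, a ≤ u → u ≤ v → v < b → f u < f v + c) :
    ∃ t s, a ≤ t ∧ t ≤ s ∧ s ≤ b ∧ gainSum f c l ≤ gain f c t s := by
  induction hl with
  | nil a => exact ⟨a, a, le_rfl, le_rfl, hab, gain_nonneg a a⟩
  | @cons a t s l hat hts hsb hl ih =>
    obtain ⟨t', s', hst', ht's', hs'b, hsum⟩ :=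
      ih hsb fun u v hu => hdd u v (hat.trans hts.le |>.trans hu)
    simp only [gainSum_cons]
    rcases le_or_gt (f s' - f t' - c) 0 with hneg' | hpos'
    · refine ⟨t, s, hat, hts.le, hsb, ?_⟩
      have : gain f c t' s' = 0 := max_eq_right hneg'
      linarith
    rcases le_or_gt (f s - f t - c) 0 with hneg | hpos
    · refine ⟨t', s', hat.trans (hts.le.trans hst'), ht's', hs'b, ?_⟩
      have : gain f c t s = 0 := max_eq_right hneg
      linarith
    have hlt : t' < s' := ht's'.lt_of_ne fun h => by subst h; linarith
    have hfall : f s < f t' + c :=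
      hdd s t' (hat.trans hts.le) hst' (hlt.trans_le hs'b)
    refine ⟨t, s', hat, hts.le.trans (hst'.trans ht's'), hs'b, ?_⟩
    have h1 : gain f c t s = f s - f t - c := max_eq_left hpos.le
    have h2 : gain f c t' s' = f s' - f t' - c := max_eq_left hpos'.le
    have h3 : f s' - f t - c ≤ gain f c t s' := le_max_left _ _
    linarith

theorem gainSum_le_maxGainLT (hf : Continuous f) (hc : 0 < c) {a b : ℝ} {l : List (ℝ × ℝ)}
    (hl : IsGainChain b a l) (hab : a ≤ b)
    (hdd : ∀ u v, a ≤ u → u ≤ v → v < b → f u < f v + c) :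
    gainSum f c l ≤ maxGainLT f c a b := by
  obtain ⟨t, s, hat, hts, hsb, hsum⟩ := exists_gainSum_le_gain hc hl hab hdd
  exact hsum.trans (gain_le_maxGainLT hf hc.le hat hts hsb)

end Gains

section Split

variable {f : ℝ → ℝ} {c M β : ℝ} (hMβ : M ≤ β) (hfall : f β + c ≤ f M)
  (hpeak : ∀ u, M ≤ u → u < β → f M < f u + c)
include hMβ hfall hpeak

/-- A pair straddling `β` gains no more than its part before the peak `M` plus its part after
`β`: the fall from `M` to `β` costs at least the `c` paid for the extra pair. -/
theorem exists_gain_le_add_of_straddle {a t s : ℝ} (hat : a ≤ t) (htβ : t < β) :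
    ∃ l, IsGainChain β a l ∧ gain f c t s ≤ gainSum f c l + gain f c β s := by
  rcases lt_or_ge t M with htM | hMt
  · refine ⟨[(t, M)], .cons hat htM hMβ (.nil M), ?_⟩
    simp only [gainSum_cons, gainSum_nil, add_zero, gain]
    exact max_le (by linarith [le_max_left (f M - f t - c) 0, le_max_left (f s - f β - c) 0])
      (by positivity)
  · refine ⟨[], .nil a, ?_⟩
    simp only [gainSum_nil, zero_add, gain]
    exact max_le_max (by linarith [hpeak t hMt htβ]) le_rfl

theorem exists_gainSum_le_split {a b : ℝ} {l : List (ℝ × ℝ)} (hl : IsGainChain b a l) :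
    ∃ l₁ l₂, IsGainChain β a l₁ ∧ IsGainChain b (max a β) l₂ ∧
      gainSum f c l ≤ gainSum f c l₁ + gainSum f c l₂ := by
  induction hl with
  | nil a => exact ⟨[], [], .nil a, .nil _, by simp⟩
  | @cons a t s l hat hts hsb hl ih =>
    obtain ⟨l₁, l₂, hl₁, hl₂, hsum⟩ := ih
    rcases le_or_gt s β with hsβ | hβs
    · rw [max_eq_right hsβ] at hl₂
      refine ⟨(t, s) :: l₁, l₂, .cons hat hts hsβ hl₁, ?_, by simp only [gainSum_cons]; linarith⟩
      rwa [max_eq_right (hat.trans (hts.le.trans hsβ))]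
    rw [max_eq_left hβs.le] at hl₂
    rw [hl₁.eq_nil_of_lt hβs, gainSum_nil, zero_add] at hsum
    rcases le_or_gt β t with hβt | htβ
    · exact ⟨[], (t, s) :: l₂, .nil a, .cons (max_le hat hβt) hts hsb hl₂,
        by simp only [gainSum_cons, gainSum_nil]; linarith⟩
    · obtain ⟨l₁', hl₁', hgain⟩ := exists_gain_le_add_of_straddle hMβ hfall hpeak (s := s) hat htβ
      exact ⟨l₁', (β, s) :: l₂, hl₁', .cons (max_le (hat.trans htβ.le) le_rfl) hβs hsb hl₂,
        by simp only [gainSum_cons]; linarith⟩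

end Split

section Decomposition

variable {f : ℝ → ℝ} {c : ℝ}

theorem sum_maxGainLT_le_UTV (hf : Continuous f) {a b : ℝ} (hbdd : BddAbove (utvSums f c a b))
    {m : ℕ} {u v : ℕ → ℝ} (hau : ∀ i < m, a ≤ u i) (huv : ∀ i < m, u i < v i)
    (hvb : ∀ i < m, v i ≤ b) (hvu : ∀ i j, i < j → j < m → v i ≤ u j) :
    ∑ i ∈ Finset.range m, maxGainLT f c (u i) (v i) ≤ UTV f c a b := by
  refine le_of_forall_pos_le_add fun ε hε => ?_
  have hε' : 0 < ε / (m + 1) := by positivity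
  choose t s hut hts hsv hgain using
    fun i : Fin m => exists_gain_ge_maxGainLT_sub (c := c) hf (huv i i.2) hε'
  have hmem : ∑ i, gain f c (t i) (s i) ∈ utvSums f c a b :=
    ⟨m, t, s, fun i => (hau i i.2).trans (hut i), fun i => (hsv i).le.trans (hvb i i.2), hts,
      fun i j hij => (hsv i).trans_le ((hvu i j hij j.2).trans (hut j)), rfl⟩
  have hm : (m : ℝ) * (ε / (m + 1)) ≤ ε := by
    rw [mul_div_assoc', div_le_iff₀ (by positivity)]
    linarith
  calc ∑ i ∈ Finset.range m, maxGainLT f c (u i) (v i)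
      = ∑ i : Fin m, maxGainLT f c (u i) (v i) := (Fin.sum_univ_eq_sum_range _ m).symm
    _ ≤ ∑ i : Fin m, (gain f c (t i) (s i) + ε / (m + 1)) :=
        Finset.sum_le_sum fun i _ => by linarith [hgain i]
    _ = ∑ i, gain f c (t i) (s i) + m * (ε / (m + 1)) := by simp [Finset.sum_add_distrib]
    _ ≤ UTV f c a b + ε := add_le_add (le_csSup hbdd hmem) hm

theorem tsum_ite_maxGainLT_eq_sum {τ : ℕ → ℝ} (hτ : Monotone τ) {n : ℕ} {T : ℝ}
    (hnT : τ n ≤ T) (hTn : T ≤ τ (n + 1)) :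
    ∑' i, (if τ i ≤ T then maxGainLT f c (τ i) (min (τ (i + 1)) T) else 0)
      = ∑ i ∈ Finset.range (n + 1), maxGainLT f c (τ i) (min (τ (i + 1)) T) := by
  rw [tsum_eq_sum (s := Finset.range (n + 1))]
  · refine Finset.sum_congr rfl fun i hi => if_pos ?_
    exact (hτ (Finset.mem_range_succ_iff.1 hi)).trans hnT
  · intro i hi
    have hTi : T ≤ τ i := hTn.trans (hτ (by simpa using hi))
    split_ifs
    · exact maxGainLT_of_le ((min_le_right _ _).trans hTi)
    · rfl

theorem gainSum_le_maxGainLT_of_epoch (hf : Continuous f) (hc : 0 < c) {n : ℕ} {b : ℝ}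
    (hnb : TcIter f c n ≤ b) (hbn : b ≤ TcIter f c (n + 1)) {l : List (ℝ × ℝ)}
    (hl : IsGainChain b (TcIter f c n) l) :
    gainSum f c l ≤ maxGainLT f c (TcIter f c n) (min (TcIter f c (n + 1)) b) := by
  rw [min_eq_right hbn]
  exact gainSum_le_maxGainLT hf hc hl hnb fun u v hu huv hv =>
    lt_add_of_mem_epoch hf hc hu huv (hv.trans_le hbn)

variable (hf : Continuous f) (hc : 0 < c) (hrec : ∀ a, (drawdownTimes f c a).Nonempty)
include hf hc hrec

theorem gainSum_le_sum_maxGainLT (n : ℕ) {b : ℝ} {l : List (ℝ × ℝ)} (hnb : TcIter f c n ≤ b)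
    (hbn : b ≤ TcIter f c (n + 1)) (hl : IsGainChain b 0 l) :
    gainSum f c l
      ≤ ∑ i ∈ Finset.range (n + 1), maxGainLT f c (TcIter f c i) (min (TcIter f c (i + 1)) b) := by
  have hτ := (TcIter_strictMono hf hc hrec).monotone
  induction n generalizing b l with
  | zero => simpa using gainSum_le_maxGainLT_of_epoch hf hc hnb hbn hl
  | succ n ih =>
    obtain ⟨M, hM, hMmax⟩ := exists_eq_sSup_image_Icc hf (hτ n.le_succ)
    have hfall : f (TcIter f c (n + 1)) + c ≤ f M := hMmax ▸ (TcIter_succ_mem hf hc hrec n).2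
    obtain ⟨l₁, l₂, hl₁, hl₂, hsum⟩ := exists_gainSum_le_split hM.2 hfall
      (fun u hMu hu => lt_add_of_mem_epoch hf hc hM.1 hMu hu) hl
    rw [max_eq_right (TcIter_nonneg hf hc hrec _)] at hl₂
    have h₁ := ih (hτ n.le_succ) le_rfl hl₁
    have h₂ := gainSum_le_maxGainLT_of_epoch hf hc hnb hbn hl₂
    have hmin : ∀ i ∈ Finset.range (n + 1),
        min (TcIter f c (i + 1)) (TcIter f c (n + 1)) = min (TcIter f c (i + 1)) b := by
      intro i hi
      have hi' : TcIter f c (i + 1) ≤ TcIter f c (n + 1) := hτ (by simpa using hi)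
      rw [min_eq_left hi', min_eq_left (hi'.trans hnb)]
    rw [Finset.sum_congr rfl fun i hi => by rw [hmin i hi]] at h₁
    rw [Finset.sum_range_succ]
    linarith

theorem UTV_eq_tsum_maxGainLT {T : ℝ} (hT : 0 < T) :
    UTV f c 0 T = ∑' i, if TcIter f c i ≤ T then
        maxGainLT f c (TcIter f c i) (min (TcIter f c (i + 1)) T) else 0 := by
  have hτ := TcIter_strictMono hf hc hrec
  obtain ⟨n, hnT, hTn⟩ := exists_TcIter_lt_le hf hc hrec hT
  rw [tsum_ite_maxGainLT_eq_sum hτ.monotone hnT.le hTn]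
  have hub := fun l (hl : IsGainChain T 0 l) => gainSum_le_sum_maxGainLT hf hc hrec n hnT.le hTn hl
  refine le_antisymm (UTV_le_of_forall_isGainChain hub) ?_
  refine sum_maxGainLT_le_UTV hf ⟨_, mem_upperBounds_utvSums hub⟩
    (fun i _ => TcIter_nonneg hf hc hrec i) (fun i hi => lt_min (hτ i.lt_succ_self) ?_)
    (fun i _ => min_le_right _ _)
    (fun i j hij _ => (min_le_left _ _).trans (hτ.monotone hij))
  exact (hτ.monotone (Nat.lt_succ_iff.1 hi)).trans_lt hnT

end Decomposition

section Probability

open scoped NNReal ENNReal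

theorem ae_exists_notMem_of_iIndepFun {Ω β : Type*} [MeasurableSpace Ω] [MeasurableSpace β]
    {P : Measure Ω} {Y : ℕ → Ω → β} (hind : ∀ n, iIndepFun (fun i : Fin n => Y i) P)
    {S : Set β} (hS : MeasurableSet S) {r : ℝ≥0∞} (hr : r < 1) (hY : ∀ k, P (Y k ⁻¹' S) ≤ r) :
    ∀ᵐ ω ∂P, ∃ k, Y k ω ∉ S := by
  have hsmall (n : ℕ) : P (⋂ k, Y k ⁻¹' S) ≤ r ^ n :=
    calc P (⋂ k, Y k ⁻¹' S) ≤ P (⋂ i ∈ (Finset.univ : Finset (Fin n)), Y i ⁻¹' S) :=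
          measure_mono fun ω hω => mem_iInter₂.2 fun i _ => mem_iInter.1 hω i
      _ = ∏ i : Fin n, P (Y i ⁻¹' S) :=
          (hind n).measure_inter_preimage_eq_mul (S := Finset.univ) fun _ _ => hS
      _ ≤ r ^ n := by
          simpa using Finset.prod_le_prod' (s := Finset.univ) fun (i : Fin n) _ => hY i
  have hnull : P (⋂ k, Y k ⁻¹' S) = 0 :=
    le_antisymm (ge_of_tendsto' (ENNReal.tendsto_pow_atTop_nhds_zero_of_lt_one hr) hsmall) zero_le
  rw [ae_iff]
  convert hnull
  ext ω
  simp

theorem gaussianReal_Ioi_lt_one (m : ℝ) {v : ℝ≥0} (hv : v ≠ 0) (x : ℝ) :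
    gaussianReal m v (Ioi x) < 1 := by
  have hIic : gaussianReal m v (Iic x) ≠ 0 := fun h => by
    simpa using gaussianReal_absolutelyContinuous' m hv h
  rw [← compl_Iic, prob_compl_eq_one_sub measurableSet_Iic]
  exact ENNReal.sub_lt_self ENNReal.one_ne_top one_ne_zero hIic

variable {Ω : Type*} [MeasurableSpace Ω] {P : Measure Ω} {B : ℝ → Ω → ℝ}

theorem IsStdBrownianMotion.ae_frequently_increment_le (hB : IsStdBrownianMotion P B) (x : ℝ) :
    ∀ᵐ ω ∂P, ∃ᶠ k : ℕ in atTop, B (k + 1) ω - B k ω ≤ x := by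
  simp only [frequently_atTop]
  refine ae_all_iff.2 fun N => ?_
  set Y : ℕ → Ω → ℝ := fun k ω => B (N + k + 1) ω - B (N + k) ω
  have hind (n : ℕ) : iIndepFun (fun i : Fin n => Y i) P := by
    convert hB.indep_incr n (fun i => N + i) (fun i j hij => by simpa using hij)
      (fun i => by positivity) using 3 with i
    simp [Y, add_assoc]
  have hlaw (k : ℕ) : P.map (Y k) = gaussianReal 0 1 := by
    simpa [Y] using hB.gauss_incr (N + k) (N + k + 1) (by positivity) (by linarith)
  have htail (k : ℕ) : P (Y k ⁻¹' Ioi x) = gaussianReal 0 1 (Ioi x) := by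
    rw [← Measure.map_apply (f := Y k) ((hB.meas _).sub (hB.meas _)) measurableSet_Ioi, hlaw k]
  filter_upwards [ae_exists_notMem_of_iIndepFun hind measurableSet_Ioi
    (gaussianReal_Ioi_lt_one 0 one_ne_zero x) (fun k => (htail k).le)] with ω ⟨k, hk⟩
  exact ⟨N + k, by omega, by simpa [Y] using hk⟩

end Probability

theorem UTV_iterated_decomposition_general {Ω : Type*} [MeasurableSpace Ω] (P : Measure Ω)
    (B : ℝ → Ω → ℝ) (hB : IsStdBrownianMotion P B)
    (μ c T : ℝ) (hc : 0 < c) (hT : 0 < T) :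
    ∀ᵐ ω ∂P,
      UTV (fun t => B t ω + μ * t) c 0 T
        = ∑' i : ℕ,
            if TcIter (fun t => B t ω + μ * t) c i ≤ T then
              maxGainLT (fun t => B t ω + μ * t) c (TcIter (fun t => B t ω + μ * t) c i)
                (min (TcIter (fun t => B t ω + μ * t) c (i + 1)) T)
            else 0 := by
  filter_upwards [hB.cont, hB.ae_frequently_increment_le (-c - μ)] with ω hcont hincr
  have hf : Continuous fun t => B t ω + μ * t := by fun_prop
  have hfall : ∃ᶠ k : ℕ in atTop, B (k + 1) ω + μ * (k + 1) + c ≤ B k ω + μ * k :=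
    hincr.mono fun k hk => by linarith
  exact UTV_eq_tsum_maxGainLT hf hc (drawdownTimes_nonempty_of_frequently hf hfall) hT

/-- Iterated decomposition: for every `μ`, `c > 0` and `T > 0`, almost surely
`UTV_μ^c[0,T] = Σ_{i ≥ 1 : T_c^{(i-1)} ≤ T} sup_{T_c^{(i-1)} ≤ t < s ≤ T_c^{(i)} ∧ T} (W_s - W_t - c)₊`. -/
theorem UTV_iterated_decomposition {Ω : Type*} [MeasurableSpace Ω] (P : Measure Ω)
    [IsProbabilityMeasure P] (B : ℝ → Ω → ℝ) (hB : IsStdBrownianMotion P B)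
    (μ c T : ℝ) (hc : 0 < c) (hT : 0 < T) :
    ∀ᵐ ω ∂P,
      UTV (fun t => B t ω + μ * t) c 0 T
        = ∑' i : ℕ,
            if TcIter (fun t => B t ω + μ * t) c i ≤ T then
              maxGainLT (fun t => B t ω + μ * t) c (TcIter (fun t => B t ω + μ * t) c i)
                (min (TcIter (fun t => B t ω + μ * t) c (i + 1)) T)
            else 0 :=
  UTV_iterated_decomposition_general P B hB μ c T hc hT
end

section
/- For every μ ∈ ℝ and c > 0, the first drawdown time T_c satisfies P(T_c < (1/3) E[T_c]) ≤ 7/9; equivalently, P(T_c ≥ (1/3) E[T_c]) ≥ 2/9. -/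
open MeasureTheory ProbabilityTheory Real Set

/-!
Cut time into blocks `[k a, (k + 1) a]` with `a = E T_c / 3`. If the drifted path falls by `c`
inside block `k`, then `T_c ≤ (k + 1) a`. The increments over distinct blocks are independent and
identically distributed, so the index of the first block containing such a fall is geometric and
`E T_c ≤ a / r`, where `r > 0` is the probability of a fall by `c` within `[0, a]`. Conversely
`T_c < a` forces a fall by `c` within `[0, a]`, so `P(T_c < a) ≤ r ≤ a / E T_c = 1 / 3`.

For a continuous path, a fall by `c` within a block is the same as falls by `c - 1 / (d + 1)`
between dyadic points of the block for every `d`; each of these only involves finitely many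
increments, which makes the block events measurable and lets independence pass to the limit.
-/

open MeasureTheory ProbabilityTheory Set Filter Topology
open scoped ENNReal

theorem MeasureTheory.Measure.map_curry_pi {ι κ α : Type*} [Fintype ι] [Fintype κ]
    [MeasurableSpace α] (ν : ι → κ → Measure α) [∀ i k, IsFiniteMeasure (ν i k)] :
    (Measure.pi fun p : ι × κ => ν p.1 p.2).map Function.curry =
      Measure.pi fun i => Measure.pi (ν i) := by
  symm
  refine Measure.pi_eq_generateFrom (fun _ => generateFrom_pi) (fun _ => isPiSystem_pi)
    (fun i => ⟨fun _ => univ, fun _ => ⟨fun _ => univ, fun _ _ => .univ, Set.pi_univ _⟩,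
      fun _ => measure_lt_top _ _, iUnion_const _⟩) fun s hs => ?_
  choose t ht hts using hs
  have hpre : Function.curry ⁻¹' univ.pi s = univ.pi fun p : ι × κ => t p.1 p.2 := by
    ext f; simp [← hts, Function.curry]
  have hs : MeasurableSet (univ.pi s) := .univ_pi fun i => hts i ▸ .univ_pi fun k => ht i k trivial
  rw [Measure.map_apply measurable_curry hs, hpre, Measure.pi_pi, Fintype.prod_prod_type]
  simp_rw [← hts, Measure.pi_pi]

namespace Drawdown

section Paths

variable {g : ℝ → ℝ} {c x y h : ℝ}

def HasDrawdown (g : ℝ → ℝ) (c x y : ℝ) : Prop :=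
  ∃ s u, x ≤ s ∧ s ≤ u ∧ u ≤ y ∧ c ≤ g s - g u

def HasDyadicDrawdown (g : ℝ → ℝ) (c x h : ℝ) (i : ℕ) : Prop :=
  ∃ l l' : ℕ, l ≤ l' ∧ l' ≤ 2 ^ i ∧ c ≤ g (x + l * (h / 2 ^ i)) - g (x + l' * (h / 2 ^ i))

lemma HasDyadicDrawdown.succ {i : ℕ} (hd : HasDyadicDrawdown g c x h i) :
    HasDyadicDrawdown g c x h (i + 1) := by
  obtain ⟨l, l', hll', hl', hcs⟩ := hd
  have hmesh (n : ℕ) : ((2 * n : ℕ) : ℝ) * (h / 2 ^ (i + 1)) = n * (h / 2 ^ i) := by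
    push_cast; rw [pow_succ]; field_simp
  exact ⟨2 * l, 2 * l', by omega, by rw [pow_succ]; omega, by rwa [hmesh, hmesh]⟩

lemma HasDyadicDrawdown.mono_level {i j : ℕ} (hij : i ≤ j) (hd : HasDyadicDrawdown g c x h i) :
    HasDyadicDrawdown g c x h j := by
  induction hij with
  | refl => exact hd
  | step _ ih => exact ih.succ

lemma HasDyadicDrawdown.hasDrawdown {i : ℕ} (hh : 0 ≤ h) (hd : HasDyadicDrawdown g c x h i) :
    HasDrawdown g c x (x + h) := by
  obtain ⟨l, l', hll', hl', hcs⟩ := hd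
  have hl'h : (l' : ℝ) * (h / 2 ^ i) ≤ h :=
    calc (l' : ℝ) * (h / 2 ^ i) ≤ 2 ^ i * (h / 2 ^ i) := by gcongr; exact_mod_cast hl'
      _ = h := by field_simp
  have hll : (l : ℝ) * (h / 2 ^ i) ≤ l' * (h / 2 ^ i) := by gcongr
  have hl : 0 ≤ (l : ℝ) * (h / 2 ^ i) := by positivity
  exact ⟨_, _, by linarith, by linarith, by linarith, hcs⟩

lemma hasDrawdown_of_forall_hasDyadicDrawdown (hg : Continuous g) (hh : 0 ≤ h)
    (H : ∀ d : ℕ, ∃ i, HasDyadicDrawdown g (c - 1 / (d + 1)) x h i) :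
    HasDrawdown g c x (x + h) := by
  set K : Set (ℝ × ℝ) := (Icc x (x + h) ×ˢ Icc x (x + h)) ∩ {p | p.1 ≤ p.2}
  have hK : IsCompact K :=
    (isCompact_Icc.prod isCompact_Icc).inter_right (isClosed_le continuous_fst continuous_snd)
  have hxK : (x, x) ∈ K := ⟨⟨left_mem_Icc.2 (by linarith), left_mem_Icc.2 (by linarith)⟩,
    show x ≤ x from le_rfl⟩
  obtain ⟨⟨s, u⟩, ⟨⟨hs, hu⟩, hsu⟩, hmax⟩ :=
    hK.exists_isMaxOn ⟨_, hxK⟩ ((hg.comp continuous_fst).sub (hg.comp continuous_snd)).continuousOn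
  refine ⟨s, u, hs.1, hsu, hu.2, le_of_forall_pos_lt_add fun ε hε => ?_⟩
  obtain ⟨d, hd⟩ := exists_nat_one_div_lt hε
  obtain ⟨i, hi⟩ := H d
  obtain ⟨s', u', hs', hs'u', hu', hcs'⟩ := hi.hasDrawdown hh
  have : g s' - g u' ≤ g s - g u :=
    hmax (show (s', u') ∈ K from ⟨⟨⟨hs', by linarith⟩, ⟨by linarith, hu'⟩⟩, hs'u'⟩)
  linarith

lemma tendsto_dyadic_mesh (h : ℝ) : Tendsto (fun i : ℕ => h / 2 ^ i) atTop (𝓝 0) := by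
  simpa [div_eq_mul_inv, ← inv_pow] using
    (tendsto_pow_atTop_nhds_zero_of_lt_one (by norm_num : (0 : ℝ) ≤ 2⁻¹)
      (by norm_num)).const_mul h

lemma tendsto_floor_dyadic (hh : 0 < h) {t : ℝ} (ht : 0 ≤ t) :
    Tendsto (fun i : ℕ => (⌊t / (h / 2 ^ i)⌋₊ : ℝ) * (h / 2 ^ i)) atTop (𝓝 t) := by
  refine tendsto_of_tendsto_of_tendsto_of_le_of_le
    (by simpa using tendsto_const_nhds (x := t) |>.sub (tendsto_dyadic_mesh h)) tendsto_const_nhds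
    (fun i => ?_) (fun i => ?_)
  · have hη : 0 < h / 2 ^ i := by positivity
    have := (div_lt_iff₀ hη).1 (Nat.lt_floor_add_one (t / (h / 2 ^ i)))
    rw [add_one_mul] at this
    dsimp only
    linarith
  · have hη : 0 < h / 2 ^ i := by positivity
    exact (le_div_iff₀ hη).1 (Nat.floor_le (div_nonneg ht hη.le))

lemma tendsto_ceil_dyadic (hh : 0 < h) {t : ℝ} (ht : 0 ≤ t) :
    Tendsto (fun i : ℕ => (⌈t / (h / 2 ^ i)⌉₊ : ℝ) * (h / 2 ^ i)) atTop (𝓝 t) := by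
  refine tendsto_of_tendsto_of_tendsto_of_le_of_le tendsto_const_nhds
    (by simpa using tendsto_const_nhds (x := t) |>.add (tendsto_dyadic_mesh h))
    (fun i => ?_) (fun i => ?_)
  · have hη : 0 < h / 2 ^ i := by positivity
    exact (div_le_iff₀ hη).1 (Nat.le_ceil _)
  · have hη : 0 < h / 2 ^ i := by positivity
    have := mul_lt_mul_of_pos_right (Nat.ceil_lt_add_one (div_nonneg ht hη.le)) hη
    rw [add_mul, div_mul_cancel₀ _ hη.ne', one_mul] at this
    exact this.le

lemma HasDrawdown.exists_hasDyadicDrawdown (hg : Continuous g) (hh : 0 < h)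
    (hd : HasDrawdown g c x (x + h)) {ε : ℝ} (hε : 0 < ε) :
    ∃ i, HasDyadicDrawdown g (c - ε) x h i := by
  obtain ⟨s, u, hxs, hsu, hux, hcs⟩ := hd
  have hgrid (t : ℝ) (f : ℕ → ℝ) (hf : Tendsto f atTop (𝓝 (t - x))) :
      Tendsto (fun i => g (x + f i)) atTop (𝓝 (g t)) := by
    simpa [Function.comp_def] using (hg.tendsto _).comp (hf.const_add x)
  have hlim := (hgrid s _ (tendsto_floor_dyadic hh (sub_nonneg.2 hxs))).sub
    (hgrid u _ (tendsto_ceil_dyadic hh (show 0 ≤ u - x by linarith)))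
  obtain ⟨i, hi⟩ := (hlim.eventually_const_lt (by linarith : c - ε < g s - g u)).exists
  have hη : 0 < h / 2 ^ i := by positivity
  refine ⟨i, _, _, ?_, ?_, hi.le⟩
  · exact (Nat.floor_le_floor (by gcongr)).trans (Nat.floor_le_ceil _)
  · rw [Nat.ceil_le, div_le_iff₀ hη]
    push_cast
    rw [mul_div_cancel₀ _ (by positivity)]
    linarith

lemma Tc_nonneg (g : ℝ → ℝ) (c : ℝ) : 0 ≤ Tc g c :=
  Real.sInf_nonneg fun _ ht => ht.1

lemma add_le_sSup_image_Icc_iff (hg : Continuous g) {t : ℝ} (ht : 0 ≤ t) :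
    g t + c ≤ sSup (g '' Icc 0 t) ↔ ∃ s, 0 ≤ s ∧ s ≤ t ∧ c ≤ g s - g t := by
  have hK : IsCompact (g '' Icc 0 t) := isCompact_Icc.image hg
  constructor
  · intro hle
    obtain ⟨s, hs, hgs⟩ := hK.sSup_mem ((nonempty_Icc.2 ht).image g)
    exact ⟨s, hs.1, hs.2, by linarith⟩
  · rintro ⟨s, hs0, hst, hcs⟩
    linarith [le_csSup hK.bddAbove (mem_image_of_mem g ⟨hs0, hst⟩)]

lemma HasDrawdown.exists_le_mem (hg : Continuous g) (hx : 0 ≤ x) (hd : HasDrawdown g c x y) :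
    ∃ u ≤ y, u ∈ {t | 0 ≤ t ∧ g t + c ≤ sSup (g '' Icc 0 t)} := by
  obtain ⟨s, u, hxs, hsu, huy, hcs⟩ := hd
  exact ⟨u, huy, by linarith,
    (add_le_sSup_image_Icc_iff hg (by linarith)).2 ⟨s, by linarith, hsu, hcs⟩⟩

lemma Tc_le_of_hasDrawdown (hg : Continuous g) (hx : 0 ≤ x) (hd : HasDrawdown g c x y) :
    Tc g c ≤ y := by
  obtain ⟨u, huy, hu⟩ := hd.exists_le_mem hg hx
  exact (csInf_le ⟨0, fun _ ht => ht.1⟩ hu).trans huy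

lemma hasDrawdown_of_Tc_lt (hg : Continuous g) (hx : 0 ≤ x) (hd : HasDrawdown g c x y)
    {z : ℝ} (hz : Tc g c < z) : HasDrawdown g c 0 z := by
  obtain ⟨u, -, hu⟩ := hd.exists_le_mem hg hx
  obtain ⟨t, ⟨ht0, htc⟩, htz⟩ := (csInf_lt_iff ⟨0, fun _ ht => ht.1⟩ ⟨u, hu⟩).1 hz
  obtain ⟨s, hs0, hst, hcs⟩ := (add_le_sSup_image_Icc_iff hg ht0).1 htc
  exact ⟨s, t, hs0, hst, htz.le, hcs⟩

end Paths

section Geometric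

variable {Ω : Type*} [MeasurableSpace Ω] {P : Measure Ω}

/-- Satisfied by independent events of equal probability; unlike independence, this form is
easily seen to pass to monotone limits. -/
def HasGeometricInter (P : Measure Ω) (H : ℕ → Set Ω) : Prop :=
  ∀ n : ℕ, P (⋂ k : Fin n, H k) = P (H 0) ^ n

lemma HasGeometricInter.of_tendsto {H : ℕ → ℕ → Set Ω} {L : ℕ → Set Ω}
    (hH : ∀ j, HasGeometricInter P (H j))
    (hlim : ∀ n : ℕ, Tendsto (fun j => P (⋂ k : Fin n, H j k)) atTop (𝓝 (P (⋂ k : Fin n, L k))))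
    (hlim₀ : Tendsto (fun j => P (H j 0)) atTop (𝓝 (P (L 0)))) :
    HasGeometricInter P L := fun n =>
  tendsto_nhds_unique (hlim n) (by simpa only [hH _ n] using ENNReal.Tendsto.pow hlim₀)

lemma HasGeometricInter.iUnion_of_monotone {H : ℕ → ℕ → Set Ω}
    (hmono : ∀ k, Monotone fun j => H j k) (hH : ∀ j, HasGeometricInter P (H j)) :
    HasGeometricInter P fun k => ⋃ j, H j k := by
  refine .of_tendsto hH (fun n => ?_) (tendsto_measure_iUnion_atTop (hmono 0))
  rw [← iUnion_iInter_of_monotone fun k : Fin n => hmono k]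
  exact tendsto_measure_iUnion_atTop fun j j' hjj' => iInter_mono fun k => hmono k hjj'

lemma HasGeometricInter.iInter_of_antitone [IsFiniteMeasure P] {H : ℕ → ℕ → Set Ω}
    (hmeas : ∀ j k, MeasurableSet (H j k)) (hanti : ∀ k, Antitone fun j => H j k)
    (hH : ∀ j, HasGeometricInter P (H j)) : HasGeometricInter P fun k => ⋂ j, H j k := by
  refine .of_tendsto hH (fun n => ?_) (tendsto_measure_iInter_atTop
    (fun j => (hmeas j 0).nullMeasurableSet) (hanti 0) ⟨0, measure_ne_top _ _⟩)
  rw [iInter_comm]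
  exact tendsto_measure_iInter_atTop
    (fun j => (MeasurableSet.iInter fun k : Fin n => hmeas j k).nullMeasurableSet)
    (fun j j' hjj' => iInter_mono fun k => hanti k hjj') ⟨0, measure_ne_top _ _⟩

lemma HasGeometricInter.measure_iInter_eq_zero {H : ℕ → Set Ω} (hgeom : HasGeometricInter P H)
    (hH : P (H 0) < 1) : P (⋂ k, H k) = 0 :=
  le_antisymm (ge_of_tendsto' (ENNReal.tendsto_pow_atTop_nhds_zero_of_lt_one hH) fun n =>
    hgeom n ▸ measure_mono fun _ hω => mem_iInter.2 fun k => mem_iInter.1 hω k) bot_le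

variable [IsProbabilityMeasure P]

lemma lintegral_le_div_of_hasGeometricInter {X : Ω → ℝ≥0∞} {G : ℕ → Set Ω} {a : ℝ≥0∞}
    (ha : a ≠ 0) (hG : ∀ k, MeasurableSet (G k)) (hgeom : HasGeometricInter P fun k => (G k)ᶜ)
    (hX : ∀ᵐ ω ∂P, ∀ k, ω ∈ G k → X ω ≤ (k + 1) * a) :
    ∫⁻ ω, X ω ∂P ≤ a / P (G 0) := by
  classical
  set C : ℕ → Set Ω := fun n => ⋂ k : Fin n, (G k)ᶜ
  have hC (n : ℕ) : MeasurableSet (C n) := .iInter fun k => (hG k).compl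
  -- `X ω / a` is at most the number of `n` such that `ω` lies in none of `G 0, …, G (n - 1)`
  have hcount : ∀ᵐ ω ∂P, X ω ≤ a * ∑' n, (C n).indicator 1 ω := by
    filter_upwards [hX] with ω hω
    by_cases hex : ∃ k, ω ∈ G k
    · have hmem (n : ℕ) (hn : n ≤ Nat.find hex) : ω ∈ C n :=
        mem_iInter.2 fun k => Nat.find_min hex (by omega)
      calc X ω ≤ (Nat.find hex + 1) * a := hω _ (Nat.find_spec hex)
        _ = a * ∑ n ∈ Finset.range (Nat.find hex + 1), (C n).indicator 1 ω := by
          rw [Finset.sum_congr rfl fun n hn => indicator_of_mem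
            (hmem n (Nat.lt_succ_iff.1 (Finset.mem_range.1 hn))) _]
          simp [mul_comm]
        _ ≤ a * ∑' n, (C n).indicator 1 ω := by gcongr; exact ENNReal.sum_le_tsum _
    · push Not at hex
      have hmem (n : ℕ) : ω ∈ C n := mem_iInter.2 fun k => hex k
      simp [indicator_of_mem (hmem _), ha]
  calc ∫⁻ ω, X ω ∂P ≤ ∫⁻ ω, a * ∑' n, (C n).indicator 1 ω ∂P := lintegral_mono_ae hcount
    _ = a * ∑' n, P (C n) := by
      rw [lintegral_const_mul _ (Measurable.tsum fun n => measurable_one.indicator (hC n)),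
        lintegral_tsum fun n => (measurable_one.indicator (hC n)).aemeasurable]
      simp_rw [lintegral_indicator_one (hC _)]
    _ = a / P (G 0) := by
      simp_rw [C, hgeom _, ENNReal.tsum_geometric, prob_compl_eq_one_sub (hG 0),
        ENNReal.sub_sub_cancel ENNReal.one_ne_top prob_le_one, div_eq_mul_inv]

theorem measure_lt_mul_lintegral_le_of_hasGeometricInter {X : Ω → ℝ} {a : ℝ} (ha : 0 < a)
    {G : ℕ → Set Ω} (hG : ∀ k, MeasurableSet (G k)) (hgeom : HasGeometricInter P fun k => (G k)ᶜ)
    (hG₀ : P (G 0) ≠ 0) (hX : ∀ᵐ ω ∂P, ∀ k, ω ∈ G k → X ω ≤ (k + 1) * a)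
    (hlt : ∀ᵐ ω ∂P, X ω < a → ∀ k, ω ∈ G k → ω ∈ G 0) :
    P {ω | X ω < a} * ∫⁻ ω, ENNReal.ofReal (X ω) ∂P ≤ ENNReal.ofReal a := by
  have hnull : P (⋂ k, (G k)ᶜ) = 0 := hgeom.measure_iInter_eq_zero <| by
    rw [prob_compl_eq_one_sub (hG 0)]
    exact ENNReal.sub_lt_self ENNReal.one_ne_top one_ne_zero hG₀
  have hsmall : P {ω | X ω < a} ≤ P (G 0) :=
    calc P {ω | X ω < a} ≤ P (G 0 ∪ ⋂ k, (G k)ᶜ) := by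
          refine measure_mono_ae ?_
          filter_upwards [hlt] with ω hω hXa
          by_cases hex : ∃ k, ω ∈ G k
          · obtain ⟨k, hk⟩ := hex
            exact Or.inl (hω hXa k hk)
          · push Not at hex
            exact Or.inr (mem_iInter.2 hex)
      _ ≤ P (G 0) := (measure_union_le _ _).trans (by rw [hnull, add_zero])
  have hint : ∫⁻ ω, ENNReal.ofReal (X ω) ∂P ≤ ENNReal.ofReal a / P (G 0) := by
    refine lintegral_le_div_of_hasGeometricInter (ENNReal.ofReal_pos.2 ha).ne' hG hgeom ?_
    filter_upwards [hX] with ω hω k hk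
    calc ENNReal.ofReal (X ω) ≤ ENNReal.ofReal ((k + 1) * a) := ENNReal.ofReal_le_ofReal (hω k hk)
      _ = (k + 1) * ENNReal.ofReal a := by
        rw [ENNReal.ofReal_mul (by positivity)]; norm_cast
  calc P {ω | X ω < a} * ∫⁻ ω, ENNReal.ofReal (X ω) ∂P
      ≤ P (G 0) * (ENNReal.ofReal a / P (G 0)) := mul_le_mul' hsmall hint
    _ = ENNReal.ofReal a := ENNReal.mul_div_cancel hG₀ (measure_ne_top _ _)

end Geometric

section Brownian

variable {Ω : Type*} {B : ℝ → Ω → ℝ} {μ c a h : ℝ}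

def gridBlock (B : ℝ → Ω → ℝ) (h : ℝ) (m k : ℕ) (ω : Ω) : Fin m → ℝ :=
  fun l => B (((k * m + l : ℕ) + 1) * h) ω - B ((k * m + l : ℕ) * h) ω

/-- With `v` the increments of `B` over consecutive grid cells and `δ` the drift per cell, the sum
is the rise of the drifted path from the `l`-th to the `l'`-th grid point. -/
def dyadicDropSet (c δ : ℝ) (m : ℕ) : Set (Fin m → ℝ) :=
  {v | ∃ l l' : ℕ, l ≤ l' ∧ l' ≤ m ∧ c ≤ -∑ p : Fin m with l ≤ p.val ∧ p.val < l', (v p + δ)}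

lemma measurableSet_dyadicDropSet (c δ : ℝ) (m : ℕ) : MeasurableSet (dyadicDropSet c δ m) := by
  simp only [dyadicDropSet, ofPred_exists, ofPred_and]
  exact .iUnion fun l => .iUnion fun l' => (MeasurableSet.const _).inter <|
    (MeasurableSet.const _).inter <| measurableSet_le measurable_const (by fun_prop)

lemma sum_filter_fin_eq_sum_Ico (f : ℕ → ℝ) {m l l' : ℕ} (hl' : l' ≤ m) :
    ∑ p : Fin m with l ≤ p.val ∧ p.val < l', f p = ∑ p ∈ Finset.Ico l l', f p := by
  rw [Finset.sum_filter, Fin.sum_univ_eq_sum_range (fun p => if l ≤ p ∧ p < l' then f p else 0),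
    ← Finset.sum_filter]
  congr 1
  ext p
  simp only [Finset.mem_filter, Finset.mem_range, Finset.mem_Ico]
  omega

lemma setOf_hasDyadicDrawdown_eq_preimage (B : ℝ → Ω → ℝ) (μ c a : ℝ) (k i : ℕ) :
    {ω | HasDyadicDrawdown (fun t => B t ω + μ * t) c (k * a) a i} =
      gridBlock B (a / 2 ^ i) (2 ^ i) k ⁻¹' dyadicDropSet c (μ * (a / 2 ^ i)) (2 ^ i) := by
  ext ω
  refine exists₂_congr fun l l' => and_congr_right fun hll' => and_congr_right fun hl' => ?_
  set F : ℕ → ℝ := fun j => B ((k * 2 ^ i + j : ℕ) * (a / 2 ^ i)) ω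
    + μ * ((k * 2 ^ i + j : ℕ) * (a / 2 ^ i))
  have hgrid (j : ℕ) : (k : ℝ) * a + j * (a / 2 ^ i) = (k * 2 ^ i + j : ℕ) * (a / 2 ^ i) := by
    push_cast; field_simp
  have hsum : ∑ p : Fin (2 ^ i) with l ≤ p.val ∧ p.val < l',
      (gridBlock B (a / 2 ^ i) (2 ^ i) k ω p + μ * (a / 2 ^ i)) = F l' - F l := by
    rw [← Finset.sum_Ico_sub F hll', ← sum_filter_fin_eq_sum_Ico _ hl']
    refine Finset.sum_congr rfl fun p _ => ?_
    simp only [gridBlock, F]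
    push_cast
    rw [← add_assoc]
    ring
  simp only [hsum, hgrid, F, neg_sub]

/-- For continuous paths, the event that the path falls by `c` within `[k * a, (k + 1) * a]`
(`mem_blockEvent_iff`). -/
def blockEvent (B : ℝ → Ω → ℝ) (μ c a : ℝ) (k : ℕ) : Set Ω :=
  ⋂ d : ℕ, ⋃ i : ℕ, {ω | HasDyadicDrawdown (fun t => B t ω + μ * t) (c - 1 / (d + 1)) (k * a) a i}

lemma mem_blockEvent_iff (ha : 0 < a) {k : ℕ} {ω : Ω} (hω : Continuous fun t => B t ω + μ * t) :
    ω ∈ blockEvent B μ c a k ↔ HasDrawdown (fun t => B t ω + μ * t) c (k * a) (k * a + a) := by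
  simp only [blockEvent, mem_iInter, mem_iUnion, mem_ofPred_eq]
  exact ⟨hasDrawdown_of_forall_hasDyadicDrawdown hω ha.le,
    fun hd d => hd.exists_hasDyadicDrawdown hω ha Nat.one_div_pos_of_nat⟩

variable [MeasurableSpace Ω] {P : Measure Ω}

lemma _root_.IsStdBrownianMotion.measurable_gridBlock (hB : IsStdBrownianMotion P B) (h : ℝ)
    (m k : ℕ) : Measurable (gridBlock B h m k) :=
  measurable_pi_lambda _ fun _ => (hB.meas _).sub (hB.meas _)

lemma _root_.IsStdBrownianMotion.iIndepFun_increments (hB : IsStdBrownianMotion P B) (hh : 0 ≤ h)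
    (N : ℕ) : iIndepFun (fun (q : Fin N) ω => B ((q + 1) * h) ω - B (q * h) ω) P := by
  have := hB.indep_incr N (fun q => (q : ℕ) * h)
    (fun q q' hqq' => mul_le_mul_of_nonneg_right (by exact_mod_cast hqq') hh)
    (fun q => by positivity)
  simpa [Fin.val_succ] using this

lemma _root_.IsStdBrownianMotion.map_increment (hB : IsStdBrownianMotion P B) (hh : 0 ≤ h)
    {q : ℝ} (hq : 0 ≤ q) :
    P.map (fun ω => B ((q + 1) * h) ω - B (q * h) ω) = gaussianReal 0 h.toNNReal := by
  rw [hB.gauss_incr _ _ (by positivity) (by nlinarith)]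
  ring_nf

lemma _root_.IsStdBrownianMotion.map_gridBlock (hB : IsStdBrownianMotion P B) (hh : 0 ≤ h)
    (n m : ℕ) :
    P.map (fun ω (k : Fin n) => gridBlock B h m k ω) =
      Measure.pi fun _ => Measure.pi fun _ => gaussianReal 0 h.toNNReal := by
  have hY := (hB.iIndepFun_increments hh (n * m)).precomp finProdFinEquiv.injective
  have hmeas (q : Fin (n * m)) : Measurable fun ω => B ((q + 1) * h) ω - B (q * h) ω :=
    (hB.meas _).sub (hB.meas _)
  have hcurry : (fun ω (k : Fin n) => gridBlock B h m k ω) =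
      Function.curry ∘ fun ω p => B (((finProdFinEquiv p : ℕ) + 1) * h) ω
        - B ((finProdFinEquiv p : ℕ) * h) ω := by
    ext ω k l
    simp only [gridBlock, finProdFinEquiv, Equiv.coe_fn_mk, Function.comp_apply, Function.curry,
      Nat.cast_add, Nat.cast_mul]
    ring_nf
  rw [hcurry, ← Measure.map_map measurable_curry (measurable_pi_lambda _ fun p => hmeas _),
    hY.map_fun_eq_pi_map fun p => (hmeas _).aemeasurable]
  simp_rw [hB.map_increment hh (Nat.cast_nonneg _)]
  exact Measure.map_curry_pi fun _ _ => gaussianReal 0 h.toNNReal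

lemma _root_.IsStdBrownianMotion.measure_gridBlock_preimage (hB : IsStdBrownianMotion P B)
    (hh : 0 ≤ h) {m : ℕ} (k : ℕ) {S : Set (Fin m → ℝ)} (hS : MeasurableSet S) :
    P (gridBlock B h m k ⁻¹' S) = Measure.pi (fun _ => gaussianReal 0 h.toNNReal) S := by
  have hmeas : Measurable fun ω (k : Fin (k + 1)) => gridBlock B h m k ω :=
    measurable_pi_lambda _ fun k => hB.measurable_gridBlock h m k
  have := hB.map_gridBlock hh (k + 1) m ▸ Measure.map_apply hmeas
    (measurable_pi_apply (Fin.last k) hS)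
  rw [(measurePreserving_eval _ _).measure_preimage hS.nullMeasurableSet] at this
  exact this.symm

lemma _root_.IsStdBrownianMotion.hasGeometricInter_gridBlock_preimage
    (hB : IsStdBrownianMotion P B) (hh : 0 ≤ h) {m : ℕ} {S : Set (Fin m → ℝ)}
    (hS : MeasurableSet S) : HasGeometricInter P fun k => gridBlock B h m k ⁻¹' S := by
  intro n
  have hmeas : Measurable fun ω (k : Fin n) => gridBlock B h m k ω :=
    measurable_pi_lambda _ fun k => hB.measurable_gridBlock h m k
  have := hB.map_gridBlock hh n m ▸ Measure.map_apply hmeas (.univ_pi fun _ => hS)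
  rw [Measure.pi_pi, Finset.prod_const, Finset.card_univ, Fintype.card_fin] at this
  rw [hB.measure_gridBlock_preimage hh 0 hS, this]
  congr 1
  ext ω
  simp

lemma measurableSet_blockEvent (hB : IsStdBrownianMotion P B) (μ c a : ℝ) (k : ℕ) :
    MeasurableSet (blockEvent B μ c a k) := by
  refine .iInter fun d => .iUnion fun i => ?_
  rw [setOf_hasDyadicDrawdown_eq_preimage]
  exact hB.measurable_gridBlock _ _ _ (measurableSet_dyadicDropSet _ _ _)

lemma _root_.IsStdBrownianMotion.hasGeometricInter_compl_blockEvent [IsFiniteMeasure P]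
    (hB : IsStdBrownianMotion P B) (ha : 0 ≤ a) :
    HasGeometricInter P fun k => (blockEvent B μ c a k)ᶜ := by
  simp only [blockEvent, compl_iInter, compl_iUnion]
  refine .iUnion_of_monotone (fun k d d' hdd' => iInter_mono fun i => compl_subset_compl.2 ?_)
    fun d => .iInter_of_antitone (fun i k => ?_) (fun k i i' hii' => compl_subset_compl.2 ?_)
      fun i => ?_
  · rintro ω ⟨l, l', hll', hl', hcs⟩
    refine ⟨l, l', hll', hl', le_trans ?_ hcs⟩
    gcongr
  · rw [setOf_hasDyadicDrawdown_eq_preimage]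
    exact (hB.measurable_gridBlock _ _ _ (measurableSet_dyadicDropSet _ _ _)).compl
  · intro ω hω
    simp only [mem_ofPred_eq] at hω ⊢
    exact hω.mono_level hii'
  · simp_rw [setOf_hasDyadicDrawdown_eq_preimage, ← preimage_compl]
    exact hB.hasGeometricInter_gridBlock_preimage (by positivity)
      (measurableSet_dyadicDropSet _ _ _).compl

lemma gaussianReal_Iic_ne_zero {v : NNReal} (hv : v ≠ 0) (x : ℝ) : gaussianReal 0 v (Iic x) ≠ 0 :=
  fun h => by simpa using gaussianReal_absolutelyContinuous' 0 hv h

lemma _root_.IsStdBrownianMotion.measure_blockEvent_zero_ne_zero (hB : IsStdBrownianMotion P B)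
    (ha : 0 < a) : P (blockEvent B μ c a 0) ≠ 0 := by
  have hfall : P ((fun ω => B a ω - B 0 ω) ⁻¹' Iic (-(c + μ * a))) ≠ 0 := by
    rw [← Measure.map_apply (f := fun ω => B a ω - B 0 ω) ((hB.meas a).sub (hB.meas 0))
      measurableSet_Iic, hB.gauss_incr 0 a le_rfl ha.le]
    exact gaussianReal_Iic_ne_zero (by simpa using ha) _
  refine fun h0 => hfall (measure_mono_null_ae ?_ h0)
  filter_upwards [hB.cont] with ω hω hdrop
  change B a ω - B 0 ω ≤ -(c + μ * a) at hdrop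
  change ω ∈ blockEvent B μ c a 0
  rw [mem_blockEvent_iff ha (by fun_prop)]
  exact ⟨0, a, by simp, ha.le, by simp, by linarith⟩

theorem _root_.IsStdBrownianMotion.measure_Tc_lt_mul_lintegral_le [IsProbabilityMeasure P]
    (hB : IsStdBrownianMotion P B) (μ c : ℝ) (ha : 0 < a) :
    P {ω | Tc (fun t => B t ω + μ * t) c < a} *
      ∫⁻ ω, ENNReal.ofReal (Tc (fun t => B t ω + μ * t) c) ∂P ≤ ENNReal.ofReal a := by
  refine measure_lt_mul_lintegral_le_of_hasGeometricInter ha (measurableSet_blockEvent hB μ c a)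
    (hB.hasGeometricInter_compl_blockEvent ha.le) (hB.measure_blockEvent_zero_ne_zero ha) ?_ ?_
  · filter_upwards [hB.cont] with ω hω k hk
    rw [mem_blockEvent_iff ha (by fun_prop)] at hk
    rw [add_one_mul]
    exact Tc_le_of_hasDrawdown (by fun_prop) (by positivity) hk
  · filter_upwards [hB.cont] with ω hω hlt k hk
    rw [mem_blockEvent_iff ha (by fun_prop)] at hk ⊢
    simpa using hasDrawdown_of_Tc_lt (by fun_prop) (by positivity) hk hlt

theorem _root_.IsStdBrownianMotion.measure_Tc_lt_third_integral_le [IsProbabilityMeasure P]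
    (hB : IsStdBrownianMotion P B) (μ c : ℝ) :
    P {ω | Tc (fun t => B t ω + μ * t) c < 1 / 3 * ∫ ω', Tc (fun t => B t ω' + μ * t) c ∂P}
      ≤ 1 / 3 := by
  set T : Ω → ℝ := fun ω => Tc (fun t => B t ω + μ * t) c
  have hT (ω : Ω) : 0 ≤ T ω := Tc_nonneg _ _
  rcases le_or_gt (∫ ω, T ω ∂P) 0 with hm | hm
  · refine (measure_mono (t := ∅) fun ω (hω : T ω < _) => ?_).trans (by simp)
    linarith [hT ω]
  have hint : Integrable T P := by
    by_contra h
    exact hm.ne' (integral_undef h)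
  have hbound := hB.measure_Tc_lt_mul_lintegral_le μ c (a := 1 / 3 * ∫ ω, T ω ∂P) (by positivity)
  rw [← ofReal_integral_eq_lintegral_ofReal hint (ae_of_all _ hT),
    ENNReal.ofReal_mul (by norm_num), ENNReal.ofReal_div_of_pos (by norm_num)] at hbound
  simpa using (ENNReal.mul_le_mul_iff_left (ENNReal.ofReal_pos.2 hm).ne'
    ENNReal.ofReal_ne_top).1 hbound

end Brownian

end Drawdown

theorem Tc_small_probability_bound_general {Ω : Type*} [MeasurableSpace Ω] (P : Measure Ω)
    [IsProbabilityMeasure P] (B : ℝ → Ω → ℝ) (hB : IsStdBrownianMotion P B)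
    (μ c : ℝ) :
    P {ω | Tc (fun t => B t ω + μ * t) c
        < 1 / 3 * ∫ ω', Tc (fun t => B t ω' + μ * t) c ∂P} ≤ 7 / 9 ∧
    2 / 9 ≤ P {ω | 1 / 3 * (∫ ω', Tc (fun t => B t ω' + μ * t) c ∂P)
        ≤ Tc (fun t => B t ω + μ * t) c} := by
  set T : Ω → ℝ := fun ω => Tc (fun t => B t ω + μ * t) c
  set m := ∫ ω', T ω' ∂P
  have hsmall : P {ω | T ω < 1 / 3 * m} ≤ 7 / 9 :=
    (hB.measure_Tc_lt_third_integral_le μ c).trans <| by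
      rw [← ENNReal.toReal_le_toReal (by finiteness) (by finiteness)]
      norm_num
  have hcover : 1 ≤ P {ω | T ω < 1 / 3 * m} + P {ω | 1 / 3 * m ≤ T ω} := by
    rw [← measure_univ (μ := P)]
    exact (measure_mono fun ω _ => lt_or_ge (T ω) (1 / 3 * m)).trans (measure_union_le _ _)
  refine ⟨hsmall, ENNReal.le_of_add_le_add_left (a := 7 / 9) (by finiteness) ?_⟩
  rw [ENNReal.div_add_div_same, show (7 + 2 : ℝ≥0∞) = 9 by norm_num,
    ENNReal.div_self (by norm_num) (by norm_num)]
  exact hcover.trans (add_le_add_left hsmall _)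

/-- For every `μ` and `c > 0`, the first drawdown time satisfies
`P(T_c < (1/3) E T_c) ≤ 7/9`; equivalently `P(T_c ≥ (1/3) E T_c) ≥ 2/9`. -/
theorem Tc_small_probability_bound {Ω : Type*} [MeasurableSpace Ω] (P : Measure Ω)
    [IsProbabilityMeasure P] (B : ℝ → Ω → ℝ) (hB : IsStdBrownianMotion P B)
    (μ c : ℝ) (hc : 0 < c) :
    P {ω | Tc (fun t => B t ω + μ * t) c
        < 1 / 3 * ∫ ω', Tc (fun t => B t ω' + μ * t) c ∂P} ≤ 7 / 9 ∧
    2 / 9 ≤ P {ω | 1 / 3 * (∫ ω', Tc (fun t => B t ω' + μ * t) c ∂P)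
        ≤ Tc (fun t => B t ω + μ * t) c} :=
  Tc_small_probability_bound_general P B hB μ c
end

section
/- Maximal trading gain under flat proportional commission: let P_t = exp(μ t + σ B_t) with σ > 0 be a geometric Brownian motion price process, let γ ∈ (0,1) be the commission ratio, and set c = ln((1 + γ)/(1 − γ)). Then, almost surely, sup_n sup_{0 ≤ t_1 < s_1 < ⋯ < t_n < s_n ≤ T} ∏_{i=1}^n ( (P_{s_i}/P_{t_i}) · (1 − γ)/(1 + γ) ) = exp( σ · UTV_{μ/σ}^{c/σ}[0,T] ). -/
open MeasureTheory ProbabilityTheory Real Set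

/-!
Taking logarithms, a strategy's wealth factor is `exp (σ ∑ (W s_i - W t_i - c/σ))` for the
continuous path `W u = B u + (μ/σ) u`. Dropping the losing round trips only increases the sum
and leaves a strategy, so the plain sums and the truncated sums defining `UTV` have the same
supremum. That supremum is finite: by uniform continuity, round trips shorter than some `δ` gain
less than `c/σ`, so every truncated gain is at most `(2 sup |W| / δ)` times the trip's length, and
the lengths of disjoint trips add up to at most `T`. Finally `x ↦ exp (σ x)` is monotone and continuous, so it commutes with the supremum.
-/

/-- The values of `F` on all round-trip schedules `a ≤ t₁ < s₁ < ⋯ < t_n < s_n ≤ b`. -/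
def scheduleValues (a b : ℝ) (F : ∀ n : ℕ, (Fin n → ℝ) → (Fin n → ℝ) → ℝ) : Set ℝ :=
  {x | ∃ (n : ℕ) (t s : Fin n → ℝ), (∀ i, a ≤ t i) ∧ (∀ i, s i ≤ b) ∧ (∀ i, t i < s i) ∧
    (∀ i j : Fin n, i < j → s i < t j) ∧ x = F n t s}

section Schedules

variable {a b : ℝ}

lemma zero_mem_scheduleValues_sum (g : ℝ → ℝ → ℝ) :
    (0 : ℝ) ∈ scheduleValues a b fun _ t s => ∑ i, g (t i) (s i) :=
  ⟨0, Fin.elim0, Fin.elim0, nofun, nofun, nofun, nofun, by simp⟩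

lemma scheduleValues_comp (φ : ℝ → ℝ) (F : ∀ n : ℕ, (Fin n → ℝ) → (Fin n → ℝ) → ℝ) :
    scheduleValues a b (fun n t s => φ (F n t s)) = φ '' scheduleValues a b F := by
  ext x
  constructor
  · rintro ⟨n, t, s, ht, hs, hts, hint, rfl⟩
    exact ⟨_, ⟨n, t, s, ht, hs, hts, hint, rfl⟩, rfl⟩
  · rintro ⟨_, ⟨n, t, s, ht, hs, hts, hint, rfl⟩, rfl⟩
    exact ⟨n, t, s, ht, hs, hts, hint, rfl⟩

lemma sum_sub_le_of_interlaced {n : ℕ} (t s : Fin n → ℝ) (hab : a ≤ b) (ht : ∀ i, a ≤ t i)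
    (hs : ∀ i, s i ≤ b) (hts : ∀ i, t i < s i) (hint : ∀ i j : Fin n, i < j → s i < t j) :
    ∑ i, (s i - t i) ≤ b - a := by
  induction n generalizing b with
  | zero => simpa using hab
  | succ n ih =>
    rw [Fin.sum_univ_castSucc]
    have hinit : ∑ i : Fin n, (s i.castSucc - t i.castSucc) ≤ t (Fin.last n) - a :=
      ih (fun i => t i.castSucc) (fun i => s i.castSucc) (ht _) (fun i => ht _)
        (fun i => (hint _ _ (Fin.castSucc_lt_last i)).le) (fun i => hts _)
        (fun i j hij => hint _ _ (Fin.castSucc_lt_castSucc_iff.mpr hij))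
    linarith [hs (Fin.last n)]

lemma scheduleValues_sum_max_subset (g : ℝ → ℝ → ℝ) :
    (scheduleValues a b fun _ t s => ∑ i, max (g (t i) (s i)) 0) ⊆
      scheduleValues a b fun _ t s => ∑ i, g (t i) (s i) := by
  rintro _ ⟨n, t, s, ht, hs, hts, hint, rfl⟩
  set gains : Fin n → ℝ := fun i => g (t i) (s i)
  set winners : Finset (Fin n) := Finset.univ.filter fun i => 0 ≤ gains i
  set e := winners.orderIsoOfFin rfl
  refine ⟨winners.card, fun i => t (e i), fun i => s (e i), fun i => ht _, fun i => hs _,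
    fun i => hts _, fun i j hij => hint _ _ (Subtype.coe_lt_coe.mpr (e.strictMono hij)), ?_⟩
  calc ∑ i, max (gains i) 0 = ∑ i ∈ winners, gains i := by
        rw [Finset.sum_filter]
        refine Finset.sum_congr rfl fun i _ => ?_
        split_ifs with h
        · exact max_eq_left h
        · exact max_eq_right (not_le.mp h).le
    _ = ∑ i : winners, gains i := (winners.sum_coe_sort gains).symm
    _ = ∑ i, gains (e i) := (Equiv.sum_comp e.toEquiv fun i : winners => gains i).symm

lemma sSup_scheduleValues_sum_max (g : ℝ → ℝ → ℝ) :
    sSup (scheduleValues a b fun _ t s => ∑ i, max (g (t i) (s i)) 0) =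
      sSup (scheduleValues a b fun _ t s => ∑ i, g (t i) (s i)) := by
  refine csSup_eq_csSup_of_forall_exists_le
    (fun x hx => ⟨x, scheduleValues_sum_max_subset g hx, le_rfl⟩) ?_
  rintro _ ⟨n, t, s, ht, hs, hts, hint, rfl⟩
  exact ⟨_, ⟨n, t, s, ht, hs, hts, hint, rfl⟩,
    Finset.sum_le_sum fun i _ => le_max_left _ _⟩

end Schedules

section ContinuousPath

variable {f : ℝ → ℝ} {a b d : ℝ}

lemma exists_max_sub_sub_le_mul (hf : ContinuousOn f (Icc a b)) (hd : 0 < d) :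
    ∃ K, 0 ≤ K ∧ ∀ t ∈ Icc a b, ∀ s ∈ Icc a b, t ≤ s → max (f s - f t - d) 0 ≤ K * (s - t) := by
  obtain ⟨C, hC⟩ := isCompact_Icc.exists_bound_of_continuousOn hf
  obtain ⟨δ, hδ, hclose⟩ :=
    Metric.uniformContinuousOn_iff.mp (isCompact_Icc.uniformContinuousOn_of_continuous hf) d hd
  refine ⟨2 * max C 0 / δ, by positivity, fun t ht s hs hts => ?_⟩
  rcases lt_or_ge (s - t) δ with hshort | hlong
  · have hgain : f s - f t < d := by
      have := hclose s hs t ht (by rw [Real.dist_eq, abs_lt]; constructor <;> linarith)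
      rw [Real.dist_eq, abs_lt] at this
      linarith
    rw [max_eq_right (by linarith)]
    exact mul_nonneg (by positivity) (by linarith)
  · have hft := abs_le.mp (Real.norm_eq_abs _ ▸ hC t ht)
    have hfs := abs_le.mp (Real.norm_eq_abs _ ▸ hC s hs)
    calc max (f s - f t - d) 0 ≤ 2 * max C 0 :=
          max_le (by linarith [le_max_left C 0]) (by positivity)
      _ = 2 * max C 0 / δ * δ := by field_simp
      _ ≤ 2 * max C 0 / δ * (s - t) := by gcongr

lemma bddAbove_scheduleValues_sum_max (hf : ContinuousOn f (Icc a b)) (hab : a ≤ b)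
    (hd : 0 < d) :
    BddAbove (scheduleValues a b fun _ t s => ∑ i, max (f (s i) - f (t i) - d) 0) := by
  obtain ⟨K, hK, hgain⟩ := exists_max_sub_sub_le_mul hf hd
  refine ⟨K * (b - a), ?_⟩
  rintro _ ⟨n, t, s, ht, hs, hts, hint, rfl⟩
  have hmem : ∀ i, t i ∈ Icc a b ∧ s i ∈ Icc a b := fun i =>
    ⟨⟨ht i, (hts i).le.trans (hs i)⟩, ⟨(ht i).trans (hts i).le, hs i⟩⟩
  calc ∑ i, max (f (s i) - f (t i) - d) 0 ≤ ∑ i, K * (s i - t i) :=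
        Finset.sum_le_sum fun i _ => hgain _ (hmem i).1 _ (hmem i).2 (hts i).le
    _ = K * ∑ i, (s i - t i) := (Finset.mul_sum _ _ _).symm
    _ ≤ K * (b - a) := by gcongr; exact sum_sub_le_of_interlaced t s hab ht hs hts hint

theorem sSup_scheduleValues_comp_sum_eq_comp_UTV {φ : ℝ → ℝ} (hφ : Monotone φ)
    (hφc : Continuous φ) (hf : ContinuousOn f (Icc a b)) (hab : a ≤ b) (hd : 0 < d) :
    sSup (scheduleValues a b fun _ t s => φ (∑ i, (f (s i) - f (t i) - d))) =
      φ (UTV f d a b) := by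
  set gains := scheduleValues a b fun _ t s => ∑ i, (f (s i) - f (t i) - d)
  have hUTV : UTV f d a b = sSup gains :=
    sSup_scheduleValues_sum_max fun t s => f s - f t - d
  have hbdd : BddAbove gains := by
    obtain ⟨M, hM⟩ := bddAbove_scheduleValues_sum_max hf hab hd
    refine ⟨M, ?_⟩
    rintro _ ⟨n, t, s, ht, hs, hts, hint, rfl⟩
    exact (Finset.sum_le_sum fun i _ => le_max_left _ _).trans
      (hM ⟨n, t, s, ht, hs, hts, hint, rfl⟩)
  rw [hUTV, scheduleValues_comp φ, hφ.map_csSup_of_continuousAt hφc.continuousAt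
    ⟨0, zero_mem_scheduleValues_sum fun t s => f s - f t - d⟩ hbdd]

end ContinuousPath

lemma prod_round_trip_eq_exp_sum (w : ℝ → ℝ) {μ σ γ : ℝ} (hσ : σ ≠ 0) (hγ : γ ∈ Ioo (-1 : ℝ) 1)
    {n : ℕ} (t s : Fin n → ℝ) :
    ∏ i, exp (μ * s i + σ * w (s i)) / exp (μ * t i + σ * w (t i)) * ((1 - γ) / (1 + γ)) =
      exp (σ * ∑ i, ((w (s i) + μ / σ * s i) - (w (t i) + μ / σ * t i) -
        log ((1 + γ) / (1 - γ)) / σ)) := by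
  have hcost : (1 - γ) / (1 + γ) = exp (-log ((1 + γ) / (1 - γ))) := by
    rw [exp_neg, exp_log (div_pos (by linarith [hγ.1]) (by linarith [hγ.2])), inv_div]
  rw [Finset.mul_sum, exp_sum]
  refine Finset.prod_congr rfl fun i _ => ?_
  rw [hcost, ← exp_sub, ← exp_add]
  congr 1
  field_simp
  ring

theorem maximal_trading_gain_general {Ω : Type*} [MeasurableSpace Ω] (P : Measure Ω)
    (B : ℝ → Ω → ℝ) (hB : IsStdBrownianMotion P B)
    (μ σ γ T : ℝ) (hσ : 0 < σ) (hγ : γ ∈ Set.Ioo (0 : ℝ) 1) (hT : 0 < T) :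
    ∀ᵐ ω ∂P,
      sSup {x | ∃ (n : ℕ) (t s : Fin n → ℝ),
          (∀ i, 0 ≤ t i) ∧ (∀ i, s i ≤ T) ∧ (∀ i, t i < s i) ∧
          (∀ i j : Fin n, i < j → s i < t j) ∧
          x = ∏ i : Fin n,
            Real.exp (μ * s i + σ * B (s i) ω) / Real.exp (μ * t i + σ * B (t i) ω)
              * ((1 - γ) / (1 + γ))}
        = Real.exp (σ * UTV (fun u => B u ω + μ / σ * u)
            (Real.log ((1 + γ) / (1 - γ)) / σ) 0 T) := by
  filter_upwards [hB.cont] with ω hω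
  have hc : 0 < log ((1 + γ) / (1 - γ)) / σ :=
    div_pos (log_pos ((one_lt_div (by linarith [hγ.2])).mpr (by linarith [hγ.1]))) hσ
  simp only [prod_round_trip_eq_exp_sum (fun u => B u ω) hσ.ne'
    (Ioo_subset_Ioo_left (by norm_num) hγ)]
  exact sSup_scheduleValues_comp_sum_eq_comp_UTV (f := fun u => B u ω + μ / σ * u)
    (fun x y hxy => exp_le_exp.mpr (mul_le_mul_of_nonneg_left hxy hσ.le))
    (by fun_prop) (by fun_prop) hT.le hc

/-- Maximal trading gain under flat proportional commission: with prices
`P_t = exp(μ t + σ B_t)`, `σ > 0`, commission ratio `γ ∈ (0,1)` and `c = log((1+γ)/(1-γ))`,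
almost surely
`sup_n sup_{0 ≤ t₁ < s₁ < ⋯ < t_n < s_n ≤ T} ∏ (P_{s_i}/P_{t_i}) (1-γ)/(1+γ)
  = exp(σ · UTV_{μ/σ}^{c/σ}[0,T])`. -/
theorem maximal_trading_gain {Ω : Type*} [MeasurableSpace Ω] (P : Measure Ω)
    [IsProbabilityMeasure P] (B : ℝ → Ω → ℝ) (hB : IsStdBrownianMotion P B)
    (μ σ γ T : ℝ) (hσ : 0 < σ) (hγ : γ ∈ Set.Ioo (0 : ℝ) 1) (hT : 0 < T) :
    ∀ᵐ ω ∂P,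
      sSup {x | ∃ (n : ℕ) (t s : Fin n → ℝ),
          (∀ i, 0 ≤ t i) ∧ (∀ i, s i ≤ T) ∧ (∀ i, t i < s i) ∧
          (∀ i j : Fin n, i < j → s i < t j) ∧
          x = ∏ i : Fin n,
            Real.exp (μ * s i + σ * B (s i) ω) / Real.exp (μ * t i + σ * B (t i) ω)
              * ((1 - γ) / (1 + γ))}
        = Real.exp (σ * UTV (fun u => B u ω + μ / σ * u)
            (Real.log ((1 + γ) / (1 - γ)) / σ) 0 T) :=
  maximal_trading_gain_general P B hB μ σ γ T hσ hγ hT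
end
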